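/- arXiv:1202.5247 — 2 statements merged into one kernel-verified Lean document; each statement's English description precedes it below -/
import Mathlib

section
/- Translation of D(Q) into ESO(Q): let Q be a monotone generalized quantifier of type ⟨k⟩, τ a vocabulary, and φ a formula of D(Q) over τ with free variables x₁,…,x_k. Then there is a sentence ψ of ESO(Q) over τ ∪ {R}, where R is a new k-ary relation symbol appearing only negatively in ψ, such that for all τ-structures M and all teams X with domain {x₁,…,x_k}: M,X ⊨ φ if and only if (M, rel(X)) ⊨ ψ. -/
open FirstOrder

universe u

namespace TeamSemantics

/-- A (local) generalized quantifier of type ⟨k⟩: to every universe `M` it assigns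
a family of k-ary relations on `M`. -/
def Quant (k : ℕ) : Type (u + 1) :=
  (M : Type u) → Set (Set (Fin k → M))

/-- `Q` is monotone (increasing). -/
def Quant.Mono {k : ℕ} (Q : Quant.{u} k) : Prop :=
  ∀ (M : Type u) (A B : Set (Fin k → M)), A ∈ Q M → A ⊆ B → B ∈ Q M

/-- `Q` is closed under isomorphisms (it is a class of structures `(M,R)`). -/
def Quant.IsoClosed {k : ℕ} (Q : Quant.{u} k) : Prop :=
  ∀ (M N : Type u) (e : M ≃ N) (A : Set (Fin k → M)),
    A ∈ Q M → ((fun a : Fin k → M => fun i => e (a i)) '' A) ∈ Q N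

/-- Non-triviality: `(M,∅) ∉ Q` and `(M,M^k) ∈ Q` for all (nonempty) `M`. -/
def Quant.NonTrivial {k : ℕ} (Q : Quant.{u} k) : Prop :=
  ∀ (M : Type u), Nonempty M → (∅ ∉ Q M ∧ Set.univ ∈ Q M)

/-- The trivially empty quantifier, used as a dummy parameter for `Q`-free logics. -/
def QEmpty (k : ℕ) : Quant.{u} k := fun _ => ∅

/-- Simultaneous update of an assignment at the tuple of variables `xs` by the tuple `a`. -/
def updVec {M : Type u} {k : ℕ} (s : ℕ → M) (xs : Fin k → ℕ) (a : Fin k → M) : ℕ → M :=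
  (List.finRange k).foldl (fun t i => Function.update t (xs i) (a i)) s

/-- The set of variables of a first-order term. -/
def tvarSet {L : FirstOrder.Language.{0, 0}} : L.Term ℕ → Set ℕ
  | .var x => {x}
  | .func _ ts => ⋃ i, tvarSet (ts i)

/-- Formulas (in negation normal form) of dependence/independence logic over `L`,
extended with a generalized quantifier of type ⟨k⟩.  The logics D, FO, FO(Q), D(Q)
and I(Q) are the fragments singled out below. -/
inductive TForm (L : FirstOrder.Language.{0, 0}) (k : ℕ) : Type
  | rel {n : ℕ} (R : L.Relations n) (ts : Fin n → L.Term ℕ)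
  | nrel {n : ℕ} (R : L.Relations n) (ts : Fin n → L.Term ℕ)
  | tEq (t t' : L.Term ℕ)
  | tNe (t t' : L.Term ℕ)
  | dep {n : ℕ} (ts : Fin n → L.Term ℕ) (t : L.Term ℕ)
  | ndep {n : ℕ} (ts : Fin n → L.Term ℕ) (t : L.Term ℕ)
  | indep {a b c : ℕ} (xb : Fin a → ℕ) (yb : Fin b → ℕ) (zb : Fin c → ℕ)
  | and (φ ψ : TForm L k)
  | or (φ ψ : TForm L k)
  | ex (y : ℕ) (φ : TForm L k)
  | all (y : ℕ) (φ : TForm L k)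
  | qu (xs : Fin k → ℕ) (φ : TForm L k)

namespace TForm

variable {L : FirstOrder.Language.{0, 0}} {k : ℕ}

/-- Formulas of dependence logic D (no independence atoms, no generalized quantifier). -/
def IsD : TForm L k → Prop
  | rel _ _ => True
  | nrel _ _ => True
  | tEq _ _ => True
  | tNe _ _ => True
  | dep _ _ => True
  | ndep _ _ => True
  | indep _ _ _ => False
  | and φ ψ => IsD φ ∧ IsD ψ
  | or φ ψ => IsD φ ∧ IsD ψ
  | ex _ φ => IsD φ
  | all _ φ => IsD φ
  | qu _ _ => False

/-- First-order formulas (no dependence/independence atoms, no generalized quantifier). -/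
def IsFO : TForm L k → Prop
  | rel _ _ => True
  | nrel _ _ => True
  | tEq _ _ => True
  | tNe _ _ => True
  | dep _ _ => False
  | ndep _ _ => False
  | indep _ _ _ => False
  | and φ ψ => IsFO φ ∧ IsFO ψ
  | or φ ψ => IsFO φ ∧ IsFO ψ
  | ex _ φ => IsFO φ
  | all _ φ => IsFO φ
  | qu _ _ => False

/-- Formulas of FO(Q) (no dependence/independence atoms). -/
def IsFOQ : TForm L k → Prop
  | rel _ _ => True
  | nrel _ _ => True
  | tEq _ _ => True
  | tNe _ _ => True
  | dep _ _ => False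
  | ndep _ _ => False
  | indep _ _ _ => False
  | and φ ψ => IsFOQ φ ∧ IsFOQ ψ
  | or φ ψ => IsFOQ φ ∧ IsFOQ ψ
  | ex _ φ => IsFOQ φ
  | all _ φ => IsFOQ φ
  | qu _ φ => IsFOQ φ

/-- Formulas of D(Q) (no independence atoms). -/
def IsDQ : TForm L k → Prop
  | rel _ _ => True
  | nrel _ _ => True
  | tEq _ _ => True
  | tNe _ _ => True
  | dep _ _ => True
  | ndep _ _ => True
  | indep _ _ _ => False
  | and φ ψ => IsDQ φ ∧ IsDQ ψ
  | or φ ψ => IsDQ φ ∧ IsDQ ψ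
  | ex _ φ => IsDQ φ
  | all _ φ => IsDQ φ
  | qu _ φ => IsDQ φ

/-- Formulas of I(Q) (independence atoms instead of dependence atoms). -/
def IsIQ : TForm L k → Prop
  | rel _ _ => True
  | nrel _ _ => True
  | tEq _ _ => True
  | tNe _ _ => True
  | dep _ _ => False
  | ndep _ _ => False
  | indep _ _ _ => True
  | and φ ψ => IsIQ φ ∧ IsIQ ψ
  | or φ ψ => IsIQ φ ∧ IsIQ ψ
  | ex _ φ => IsIQ φ
  | all _ φ => IsIQ φ
  | qu _ φ => IsIQ φ

/-- The set of free variables of a formula; all variables of a dependence or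
independence atom count as free. -/
def FV : TForm L k → Set ℕ
  | rel _ ts => ⋃ i, tvarSet (ts i)
  | nrel _ ts => ⋃ i, tvarSet (ts i)
  | tEq t t' => tvarSet t ∪ tvarSet t'
  | tNe t t' => tvarSet t ∪ tvarSet t'
  | dep ts t => (⋃ i, tvarSet (ts i)) ∪ tvarSet t
  | ndep ts t => (⋃ i, tvarSet (ts i)) ∪ tvarSet t
  | indep xb yb zb => Set.range xb ∪ Set.range yb ∪ Set.range zb
  | and φ ψ => FV φ ∪ FV ψ
  | or φ ψ => FV φ ∪ FV ψ
  | ex y φ => FV φ \ {y}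
  | all y φ => FV φ \ {y}
  | qu xs φ => FV φ \ Set.range xs

end TForm

variable {L : FirstOrder.Language.{0, 0}} {k : ℕ}

/-- Team semantics for D(Q)/I(Q).  A team is a set of assignments `ℕ → M`. -/
def TSat (Q : Quant.{u} k) (M : Type u) [L.Structure M] :
    TForm L k → Set (ℕ → M) → Prop
  | .rel R ts, X => ∀ s ∈ X, FirstOrder.Language.Structure.RelMap R (fun i => (ts i).realize s)
  | .nrel R ts, X => ∀ s ∈ X, ¬ FirstOrder.Language.Structure.RelMap R (fun i => (ts i).realize s)
  | .tEq t t', X => ∀ s ∈ X, t.realize s = t'.realize s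
  | .tNe t t', X => ∀ s ∈ X, t.realize s ≠ t'.realize s
  | .dep ts t, X => ∀ s ∈ X, ∀ s' ∈ X,
      (∀ i, (ts i).realize s = (ts i).realize s') → t.realize s = t.realize s'
  | .ndep _ _, X => X = ∅
  | .indep xb yb zb, X => ∀ s ∈ X, ∀ s' ∈ X, (∀ i, s (xb i) = s' (xb i)) →
      ∃ s₀ ∈ X, (∀ i, s₀ (xb i) = s (xb i)) ∧ (∀ i, s₀ (yb i) = s (yb i)) ∧
        (∀ i, s₀ (zb i) = s' (zb i))
  | .and φ ψ, X => TSat Q M φ X ∧ TSat Q M ψ X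
  | .or φ ψ, X => ∃ Y Z, X = Y ∪ Z ∧ TSat Q M φ Y ∧ TSat Q M ψ Z
  | .ex y φ, X => ∃ f : (ℕ → M) → M,
      TSat Q M φ ((fun s => Function.update s y (f s)) '' X)
  | .all y φ, X => TSat Q M φ {s' | ∃ s ∈ X, ∃ a : M, s' = Function.update s y a}
  | .qu xs φ, X => ∃ F : (ℕ → M) → Set (Fin k → M), (∀ s ∈ X, F s ∈ Q M) ∧
      TSat Q M φ {s' | ∃ s ∈ X, ∃ a ∈ F s, s' = updVec s xs a}

/-- Tarskian (single-assignment) semantics for the FO(Q)-fragment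
(dependence and independence atoms are given a dummy interpretation). -/
def PSat (Q : Quant.{u} k) (M : Type u) [L.Structure M] :
    TForm L k → (ℕ → M) → Prop
  | .rel R ts, s => FirstOrder.Language.Structure.RelMap R (fun i => (ts i).realize s)
  | .nrel R ts, s => ¬ FirstOrder.Language.Structure.RelMap R (fun i => (ts i).realize s)
  | .tEq t t', s => t.realize s = t'.realize s
  | .tNe t t', s => t.realize s ≠ t'.realize s
  | .dep _ _, _ => True
  | .ndep _ _, _ => False
  | .indep _ _ _, _ => True
  | .and φ ψ, s => PSat Q M φ s ∧ PSat Q M ψ s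
  | .or φ ψ, s => PSat Q M φ s ∨ PSat Q M ψ s
  | .ex y φ, s => ∃ a : M, PSat Q M φ (Function.update s y a)
  | .all y φ, s => ∀ a : M, PSat Q M φ (Function.update s y a)
  | .qu xs φ, s => {a : Fin k → M | PSat Q M φ (updVec s xs a)} ∈ Q M

/-- Truth of a sentence in a structure: satisfaction by the team of the empty assignment
(rendered with total assignments: every singleton team satisfies the sentence). -/
def TTrue (Q : Quant.{u} k) (M : Type u) [L.Structure M] (φ : TForm L k) : Prop :=
  ∀ s : ℕ → M, TSat Q M φ {s}

/-- `rel(X)`: the k-ary relation induced by a team `X` on the variables `xs`. -/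
def relOf {M : Type u} (xs : Fin k → ℕ) (X : Set (ℕ → M)) : Set (Fin k → M) :=
  (fun s => fun i => s (xs i)) '' X

end TeamSemantics
namespace TeamSemantics

/-- Terms over `L` together with second-order function variables
(`fvar n name ts` is the function variable of arity `n` named `name`,
applied to the terms `ts`). -/
inductive ETerm (L : FirstOrder.Language.{0, 0}) : Type
  | var (x : ℕ)
  | func {n : ℕ} (f : L.Functions n) (ts : Fin n → ETerm L)
  | fvar (n : ℕ) (name : ℕ) (ts : Fin n → ETerm L)

/-- Formulas of ESO(Q) (in negation normal form) over `L`, where `Q` has type ⟨k⟩: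
atomic and negated atomic formulas (including second-order relation variables
`rvar`/`nrvar`), conjunction, disjunction, first-order quantifiers, the quantifier `Q`
(`qu`), and existential second-order relation (`exrel`) and function (`exfun`)
quantifiers. -/
inductive EForm (L : FirstOrder.Language.{0, 0}) (k : ℕ) : Type
  | rel {n : ℕ} (R : L.Relations n) (ts : Fin n → ETerm L)
  | nrel {n : ℕ} (R : L.Relations n) (ts : Fin n → ETerm L)
  | eEq (t t' : ETerm L)
  | eNe (t t' : ETerm L)
  | rvar (n : ℕ) (name : ℕ) (ts : Fin n → ETerm L)
  | nrvar (n : ℕ) (name : ℕ) (ts : Fin n → ETerm L)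
  | and (φ ψ : EForm L k)
  | or (φ ψ : EForm L k)
  | ex (x : ℕ) (φ : EForm L k)
  | all (x : ℕ) (φ : EForm L k)
  | qu (xs : Fin k → ℕ) (φ : EForm L k)
  | exrel (n : ℕ) (name : ℕ) (φ : EForm L k)
  | exfun (n : ℕ) (name : ℕ) (φ : EForm L k)

/-- An assignment of relations to the second-order relation variables. -/
def RAssign (M : Type u) : Type u :=
  (n : ℕ) → ℕ → Set (Fin n → M)

/-- An assignment of functions to the second-order function variables. -/
def FAssign (M : Type u) : Type u :=
  (n : ℕ) → ℕ → ((Fin n → M) → M)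

def RAssign.set {M : Type u} (ρ : RAssign M) (n name : ℕ) (R : Set (Fin n → M)) :
    RAssign M :=
  fun m nm => if h : m = n ∧ nm = name then cast (by rw [h.1]) R else ρ m nm

def FAssign.set {M : Type u} (Fa : FAssign M) (n name : ℕ) (g : (Fin n → M) → M) :
    FAssign M :=
  fun m nm => if h : m = n ∧ nm = name then cast (by rw [h.1]) g else Fa m nm

variable {L : FirstOrder.Language.{0, 0}} {k : ℕ}

/-- Evaluation of an extended term. -/
def ETerm.eval {M : Type u} [L.Structure M] (Fa : FAssign M) (s : ℕ → M) :
    ETerm L → M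
  | .var x => s x
  | .func f ts => FirstOrder.Language.Structure.funMap f (fun i => (ts i).eval Fa s)
  | .fvar n name ts => Fa n name (fun i => (ts i).eval Fa s)

/-- Tarskian satisfaction for ESO(Q). -/
def ESat (Q : Quant.{u} k) (M : Type u) [L.Structure M]
    (ρ : RAssign M) (Fa : FAssign M) (s : ℕ → M) : EForm L k → Prop
  | .rel R ts => FirstOrder.Language.Structure.RelMap R (fun i => (ts i).eval Fa s)
  | .nrel R ts => ¬ FirstOrder.Language.Structure.RelMap R (fun i => (ts i).eval Fa s)
  | .eEq t t' => t.eval Fa s = t'.eval Fa s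
  | .eNe t t' => t.eval Fa s ≠ t'.eval Fa s
  | .rvar n name ts => (fun i => (ts i).eval Fa s) ∈ ρ n name
  | .nrvar n name ts => (fun i => (ts i).eval Fa s) ∉ ρ n name
  | .and φ ψ => ESat Q M ρ Fa s φ ∧ ESat Q M ρ Fa s ψ
  | .or φ ψ => ESat Q M ρ Fa s φ ∨ ESat Q M ρ Fa s ψ
  | .ex x φ => ∃ a : M, ESat Q M ρ Fa (Function.update s x a) φ
  | .all x φ => ∀ a : M, ESat Q M ρ Fa (Function.update s x a) φ
  | .qu xs φ => {a : Fin k → M | ESat Q M ρ Fa (updVec s xs a) φ} ∈ Q M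
  | .exrel n name φ => ∃ R : Set (Fin n → M), ESat Q M (ρ.set n name R) Fa s φ
  | .exfun n name φ => ∃ g : (Fin n → M) → M, ESat Q M ρ (Fa.set n name g) s φ

namespace ETerm

/-- First-order variables occurring in an extended term. -/
def fovars : ETerm L → Set ℕ
  | .var x => {x}
  | .func _ ts => ⋃ i, fovars (ts i)
  | .fvar _ _ ts => ⋃ i, fovars (ts i)

/-- Function variables (arity, name) occurring in an extended term. -/
def ffvars : ETerm L → Set (ℕ × ℕ)
  | .var _ => ∅
  | .func _ ts => ⋃ i, ffvars (ts i)
  | .fvar n name ts => insert (n, name) (⋃ i, ffvars (ts i))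

end ETerm

namespace EForm

/-- Free first-order variables of an ESO(Q) formula. -/
def fv : EForm L k → Set ℕ
  | rel _ ts => ⋃ i, (ts i).fovars
  | nrel _ ts => ⋃ i, (ts i).fovars
  | eEq t t' => t.fovars ∪ t'.fovars
  | eNe t t' => t.fovars ∪ t'.fovars
  | rvar _ _ ts => ⋃ i, (ts i).fovars
  | nrvar _ _ ts => ⋃ i, (ts i).fovars
  | and φ ψ => fv φ ∪ fv ψ
  | or φ ψ => fv φ ∪ fv ψ
  | ex x φ => fv φ \ {x}
  | all x φ => fv φ \ {x}
  | qu xs φ => fv φ \ Set.range xs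
  | exrel _ _ φ => fv φ
  | exfun _ _ φ => fv φ

/-- Free second-order relation variables. -/
def freeRVars : EForm L k → Set (ℕ × ℕ)
  | rel _ _ => ∅
  | nrel _ _ => ∅
  | eEq _ _ => ∅
  | eNe _ _ => ∅
  | rvar n name _ => {(n, name)}
  | nrvar n name _ => {(n, name)}
  | and φ ψ => freeRVars φ ∪ freeRVars ψ
  | or φ ψ => freeRVars φ ∪ freeRVars ψ
  | ex _ φ => freeRVars φ
  | all _ φ => freeRVars φ
  | qu _ φ => freeRVars φ
  | exrel n name φ => freeRVars φ \ {(n, name)}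
  | exfun _ _ φ => freeRVars φ

/-- Free second-order function variables. -/
def freeFVars : EForm L k → Set (ℕ × ℕ)
  | rel _ ts => ⋃ i, (ts i).ffvars
  | nrel _ ts => ⋃ i, (ts i).ffvars
  | eEq t t' => t.ffvars ∪ t'.ffvars
  | eNe t t' => t.ffvars ∪ t'.ffvars
  | rvar _ _ ts => ⋃ i, (ts i).ffvars
  | nrvar _ _ ts => ⋃ i, (ts i).ffvars
  | and φ ψ => freeFVars φ ∪ freeFVars ψ
  | or φ ψ => freeFVars φ ∪ freeFVars ψ
  | ex _ φ => freeFVars φ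
  | all _ φ => freeFVars φ
  | qu _ φ => freeFVars φ
  | exrel _ _ φ => freeFVars φ
  | exfun n name φ => freeFVars φ \ {(n, name)}

/-- A sentence: no free first-order variables and no free second-order variables. -/
def Sentence (φ : EForm L k) : Prop :=
  fv φ = ∅ ∧ freeRVars φ = ∅ ∧ freeFVars φ = ∅

/-- A sentence over the vocabulary `τ ∪ {R}`, where `R` is rendered as the
second-order relation variable of arity `r` named `0`. -/
def SentenceWithR (r : ℕ) (φ : EForm L k) : Prop :=
  fv φ = ∅ ∧ freeRVars φ ⊆ {(r, 0)} ∧ freeFVars φ = ∅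

/-- No occurrence of the generalized quantifier `Q`: the formula is in ESO. -/
def NoQu : EForm L k → Prop
  | rel _ _ => True
  | nrel _ _ => True
  | eEq _ _ => True
  | eNe _ _ => True
  | rvar _ _ _ => True
  | nrvar _ _ _ => True
  | and φ ψ => NoQu φ ∧ NoQu ψ
  | or φ ψ => NoQu φ ∧ NoQu ψ
  | ex _ φ => NoQu φ
  | all _ φ => NoQu φ
  | qu _ _ => False
  | exrel _ _ φ => NoQu φ
  | exfun _ _ φ => NoQu φ

/-- The relation variable `(r, name)` occurs only negatively (and is never rebound). -/
def OnlyNeg (r name : ℕ) : EForm L k → Prop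
  | rel _ _ => True
  | nrel _ _ => True
  | eEq _ _ => True
  | eNe _ _ => True
  | rvar n nm _ => ¬ (n = r ∧ nm = name)
  | nrvar _ _ _ => True
  | and φ ψ => OnlyNeg r name φ ∧ OnlyNeg r name ψ
  | or φ ψ => OnlyNeg r name φ ∧ OnlyNeg r name ψ
  | ex _ φ => OnlyNeg r name φ
  | all _ φ => OnlyNeg r name φ
  | qu _ φ => OnlyNeg r name φ
  | exrel n nm φ => ¬ (n = r ∧ nm = name) ∧ OnlyNeg r name φ
  | exfun _ _ φ => OnlyNeg r name φ

/-- Quantifier-free formulas. -/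
def QFree : EForm L k → Prop
  | rel _ _ => True
  | nrel _ _ => True
  | eEq _ _ => True
  | eNe _ _ => True
  | rvar _ _ _ => True
  | nrvar _ _ _ => True
  | and φ ψ => QFree φ ∧ QFree ψ
  | or φ ψ => QFree φ ∧ QFree ψ
  | ex _ _ => False
  | all _ _ => False
  | qu _ _ => False
  | exrel _ _ _ => False
  | exfun _ _ _ => False

/-- A prefix of first-order quantifiers from `{Q, ∀}` in front of a
quantifier-free formula. -/
def QuantPrefix : EForm L k → Prop
  | all _ φ => QuantPrefix φ
  | qu _ φ => QuantPrefix φ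
  | φ => QFree φ

/-- Normal form: `∃f₁ ⋯ ∃fₙ Q′₁x₁ ⋯ Q′ₘxₘ ψ` with each `Q′ᵢ ∈ {Q, ∀}` and `ψ`
quantifier-free. -/
def NormalForm : EForm L k → Prop
  | exfun _ _ φ => NormalForm φ
  | φ => QuantPrefix φ

/-- No second-order relation variables occur. -/
def NoRVar : EForm L k → Prop
  | rel _ _ => True
  | nrel _ _ => True
  | eEq _ _ => True
  | eNe _ _ => True
  | rvar _ _ _ => False
  | nrvar _ _ _ => False
  | and φ ψ => NoRVar φ ∧ NoRVar ψ
  | or φ ψ => NoRVar φ ∧ NoRVar ψ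
  | ex _ φ => NoRVar φ
  | all _ φ => NoRVar φ
  | qu _ φ => NoRVar φ
  | exrel _ _ _ => False
  | exfun _ _ φ => NoRVar φ

/-- None of the variables in `V` is bound anywhere in the formula. -/
def AvoidsBinding (V : Set ℕ) : EForm L k → Prop
  | rel _ _ => True
  | nrel _ _ => True
  | eEq _ _ => True
  | eNe _ _ => True
  | rvar _ _ _ => True
  | nrvar _ _ _ => True
  | and φ ψ => AvoidsBinding V φ ∧ AvoidsBinding V ψ
  | or φ ψ => AvoidsBinding V φ ∧ AvoidsBinding V ψ
  | ex x φ => x ∉ V ∧ AvoidsBinding V φ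
  | all x φ => x ∉ V ∧ AvoidsBinding V φ
  | qu xs φ => (∀ i, xs i ∉ V) ∧ AvoidsBinding V φ
  | exrel _ _ φ => AvoidsBinding V φ
  | exfun _ _ φ => AvoidsBinding V φ

/-- All function-variable (arity, name) pairs occurring anywhere in the formula,
whether free, bound, or as a binder. -/
def fNames : EForm L k → Set (ℕ × ℕ)
  | rel _ ts => ⋃ i, (ts i).ffvars
  | nrel _ ts => ⋃ i, (ts i).ffvars
  | eEq t t' => t.ffvars ∪ t'.ffvars
  | eNe t t' => t.ffvars ∪ t'.ffvars
  | rvar _ _ ts => ⋃ i, (ts i).ffvars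
  | nrvar _ _ ts => ⋃ i, (ts i).ffvars
  | and φ ψ => fNames φ ∪ fNames ψ
  | or φ ψ => fNames φ ∪ fNames ψ
  | ex _ φ => fNames φ
  | all _ φ => fNames φ
  | qu _ φ => fNames φ
  | exrel _ _ φ => fNames φ
  | exfun n name φ => insert (n, name) (fNames φ)

end EForm

/-- Truth of an ESO(Q) sentence in a structure. -/
def ETrue (Q : Quant.{u} k) (M : Type u) [L.Structure M] (φ : EForm L k) : Prop :=
  ∀ (ρ : RAssign M) (Fa : FAssign M) (s : ℕ → M), ESat Q M ρ Fa s φ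

/-- Truth of an ESO(Q) sentence over `τ ∪ {R}` in the structure `(M, R)`,
where the distinguished relation variable of arity `r` named `0` is interpreted as `R`. -/
def ETrueWithR (Q : Quant.{u} k) (M : Type u) [L.Structure M] {r : ℕ}
    (R : Set (Fin r → M)) (φ : EForm L k) : Prop :=
  ∀ (ρ : RAssign M) (Fa : FAssign M) (s : ℕ → M), ESat Q M (ρ.set r 0 R) Fa s φ

/-- `Q` is definable in ESO: `Q = Mod(φ)` for an ESO-sentence `φ` over the vocabulary
`{R}` with `R` of arity `k` (the empty language plus the distinguished relation
variable of arity `k` named `0`). -/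
def ESODefinable (k : ℕ) (Q : Quant.{u} k) : Prop :=
  ∃ φ : EForm FirstOrder.Language.empty 0, φ.NoQu ∧ φ.SentenceWithR k ∧
    ∀ (M : Type u), Nonempty M → ∀ R : Set (Fin k → M),
      letI := FirstOrder.Language.emptyStructure (M := M)
      (R ∈ Q M ↔ ETrueWithR (QEmpty 0) M R φ)

end TeamSemantics
namespace TeamSemantics

variable {L : FirstOrder.Language.{0, 0}} {k : ℕ}

/-- Replace every occurrence `f(t₁,…,tₘ)` of the function variable `(m, nf)` by
`g(x̄, t₁,…,tₘ)`, where `g` is the function variable `(k + m, ng)`. -/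
def ETerm.skolemSubst (k m nf ng : ℕ) (xs : Fin k → ℕ) : ETerm L → ETerm L
  | .var x => .var x
  | .func f ts => .func f (fun i => (ts i).skolemSubst k m nf ng xs)
  | .fvar n name ts =>
      if h : n = m ∧ name = nf then
        .fvar (k + m) ng (Fin.append (fun i => ETerm.var (xs i))
          (fun j => ((ts (Fin.cast h.1.symm j)).skolemSubst k m nf ng xs)))
      else .fvar n name (fun i => (ts i).skolemSubst k m nf ng xs)

/-- Replace every occurrence `f(t₁,…,tₘ)` of the function variable `(m, nf)` by
`g(x̄, t₁,…,tₘ)` throughout a formula (stopping where `(m, nf)` is rebound). -/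
def EForm.skolemSubst (m nf ng : ℕ) (xs : Fin k → ℕ) : EForm L k → EForm L k
  | .rel R ts => .rel R (fun i => (ts i).skolemSubst k m nf ng xs)
  | .nrel R ts => .nrel R (fun i => (ts i).skolemSubst k m nf ng xs)
  | .eEq t t' => .eEq (t.skolemSubst k m nf ng xs) (t'.skolemSubst k m nf ng xs)
  | .eNe t t' => .eNe (t.skolemSubst k m nf ng xs) (t'.skolemSubst k m nf ng xs)
  | .rvar n name ts => .rvar n name (fun i => (ts i).skolemSubst k m nf ng xs)
  | .nrvar n name ts => .nrvar n name (fun i => (ts i).skolemSubst k m nf ng xs)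
  | .and φ ψ => .and (φ.skolemSubst m nf ng xs) (ψ.skolemSubst m nf ng xs)
  | .or φ ψ => .or (φ.skolemSubst m nf ng xs) (ψ.skolemSubst m nf ng xs)
  | .ex x φ => .ex x (φ.skolemSubst m nf ng xs)
  | .all x φ => .all x (φ.skolemSubst m nf ng xs)
  | .qu zs φ => .qu zs (φ.skolemSubst m nf ng xs)
  | .exrel n name φ => .exrel n name (φ.skolemSubst m nf ng xs)
  | .exfun n name φ =>
      if n = m ∧ name = nf then .exfun n name φ
      else .exfun n name (φ.skolemSubst m nf ng xs)

/-- Every occurrence of a function variable in the term is of the form `fᵢ(x̄ⁱ)`: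
it is `fvar (a i) i` applied to the tuple of distinct variables `arg i`. -/
def ETerm.GoodOcc (n : ℕ) (a : Fin n → ℕ) (arg : (i : Fin n) → Fin (a i) → ℕ) :
    ETerm L → Prop
  | .var _ => True
  | .func _ ts => ∀ j, (ts j).GoodOcc n a arg
  | .fvar nn name ts => ∃ i : Fin n, ∃ h : nn = a i, name = i.val ∧
      ∀ j : Fin nn, ts j = ETerm.var (arg i (Fin.cast h j))

/-- Every occurrence of a function variable in the formula is of the form `fᵢ(x̄ⁱ)`. -/
def EForm.GoodOcc (n : ℕ) (a : Fin n → ℕ) (arg : (i : Fin n) → Fin (a i) → ℕ) :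
    EForm L k → Prop
  | .rel _ ts => ∀ i, (ts i).GoodOcc n a arg
  | .nrel _ ts => ∀ i, (ts i).GoodOcc n a arg
  | .eEq t t' => t.GoodOcc n a arg ∧ t'.GoodOcc n a arg
  | .eNe t t' => t.GoodOcc n a arg ∧ t'.GoodOcc n a arg
  | .rvar _ _ ts => ∀ i, (ts i).GoodOcc n a arg
  | .nrvar _ _ ts => ∀ i, (ts i).GoodOcc n a arg
  | .and φ ψ => φ.GoodOcc n a arg ∧ ψ.GoodOcc n a arg
  | .or φ ψ => φ.GoodOcc n a arg ∧ ψ.GoodOcc n a arg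
  | .ex _ φ => φ.GoodOcc n a arg
  | .all _ φ => φ.GoodOcc n a arg
  | .qu _ φ => φ.GoodOcc n a arg
  | .exrel _ _ φ => φ.GoodOcc n a arg
  | .exfun _ _ φ => φ.GoodOcc n a arg

/-- Replace each occurrence of the function variable named `i` (for `i < n`) by the
fresh first-order variable `ys i`, turning an extended term into a first-order term. -/
def ETerm.unfunc (n : ℕ) (ys : Fin n → ℕ) : ETerm L → L.Term ℕ
  | .var x => FirstOrder.Language.Term.var x
  | .func f ts => FirstOrder.Language.Term.func f (fun i => (ts i).unfunc n ys)
  | .fvar _ name _ =>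
      if h : name < n then FirstOrder.Language.Term.var (ys ⟨name, h⟩)
      else FirstOrder.Language.Term.var 0

/-- The formula `θ` obtained from `ψ` by replacing each term `fᵢ(x̄ⁱ)` by the fresh
variable `yᵢ` (second-order constructs, which do not occur in the intended use,
are mapped to a dummy formula). -/
def EForm.toTForm (n : ℕ) (ys : Fin n → ℕ) : EForm L k → TForm L k
  | .rel R ts => .rel R (fun i => (ts i).unfunc n ys)
  | .nrel R ts => .nrel R (fun i => (ts i).unfunc n ys)
  | .eEq t t' => .tEq (t.unfunc n ys) (t'.unfunc n ys)
  | .eNe t t' => .tNe (t.unfunc n ys) (t'.unfunc n ys)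
  | .rvar _ _ _ => .tEq (FirstOrder.Language.Term.var 0) (FirstOrder.Language.Term.var 0)
  | .nrvar _ _ _ => .tEq (FirstOrder.Language.Term.var 0) (FirstOrder.Language.Term.var 0)
  | .and φ ψ => .and (φ.toTForm n ys) (ψ.toTForm n ys)
  | .or φ ψ => .or (φ.toTForm n ys) (ψ.toTForm n ys)
  | .ex x φ => .ex x (φ.toTForm n ys)
  | .all x φ => .all x (φ.toTForm n ys)
  | .qu zs φ => .qu zs (φ.toTForm n ys)
  | .exrel _ _ φ => φ.toTForm n ys
  | .exfun _ _ φ => φ.toTForm n ys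

end TeamSemantics
namespace TeamSemantics

open FirstOrder



variable {L : FirstOrder.Language.{0, 0}} {kq : ℕ}

section foldl

variable {M : Type u} {ι : Type}

private lemma foldl_update_congr (f : ι → ℕ) (g : ι → M) (y : ℕ) :
    ∀ (l : List ι) (t t' : ℕ → M),
      ((∃ i ∈ l, f i = y) ∨ t y = t' y) →
      (l.foldl (fun t i => Function.update t (f i) (g i)) t) y =
      (l.foldl (fun t i => Function.update t (f i) (g i)) t') y := by
  intro l
  induction l with
  | nil => intro t t' h; rcases h with ⟨i, hi, _⟩ | h; · exact absurd hi (List.not_mem_nil (a := i))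
           · exact h
  | cons j l ih =>
    intro t t' h
    simp only [List.foldl_cons]
    apply ih
    by_cases hj : f j = y
    · right; simp [hj, Function.update_apply]
    · rcases h with ⟨i, hi, hiy⟩ | h
      · rcases List.mem_cons.1 hi with rfl | hi
        · exact absurd hiy hj
        · exact Or.inl ⟨i, hi, hiy⟩
      · right; simp [Function.update_apply, hj, h]

private lemma foldl_update_notmem (f : ι → ℕ) (g : ι → M) (y : ℕ) :
    ∀ (l : List ι) (t : ℕ → M), (∀ i ∈ l, f i ≠ y) →
      (l.foldl (fun t i => Function.update t (f i) (g i)) t) y = t y := by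
  intro l
  induction l with
  | nil => intro t _; rfl
  | cons j l ih =>
    intro t h
    simp only [List.foldl_cons]
    rw [ih _ (fun i hi => h i (List.mem_cons_of_mem _ hi)),
      Function.update_apply, if_neg (fun hy : y = f j => (h j (List.mem_cons_self (a := j) (l := l))) hy.symm)]

private lemma foldl_update_apply (f : ι → ℕ) (g : ι → M) (i : ι) :
    ∀ (l : List ι) (t : ℕ → M), i ∈ l → (∀ j ∈ l, f j = f i → j = i) →
      (l.foldl (fun t i => Function.update t (f i) (g i)) t) (f i) = g i := by
  intro l
  induction l with
  | nil => intro t h; exact absurd h (List.not_mem_nil (a := i))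
  | cons j l ih =>
    intro t hmem huniq
    simp only [List.foldl_cons]
    by_cases hil : i ∈ l
    · exact ih _ hil (fun j hj => huniq j (List.mem_cons_of_mem _ hj))
    · have hji : j = i := by
        rcases List.mem_cons.1 hmem with rfl | h; · rfl
        · exact absurd h hil
      subst hji
      rw [foldl_update_notmem]
      · simp
      · intro i' hi' hfi
        exact hil (by rwa [huniq i' (List.mem_cons_of_mem _ hi') hfi] at hi')

end foldl

section updVec

variable {M : Type u} {k : ℕ}

lemma updVec_congr_pt {xs : Fin k → ℕ} {a : Fin k → M} {s s' : ℕ → M} {y : ℕ}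
    (h : s y = s' y) : updVec s xs a y = updVec s' xs a y :=
  foldl_update_congr xs a y _ s s' (Or.inr h)

lemma updVec_mem {xs : Fin k → ℕ} {a : Fin k → M} (s s' : ℕ → M) {y : ℕ}
    (h : y ∈ Set.range xs) : updVec s xs a y = updVec s' xs a y := by
  obtain ⟨i, rfl⟩ := h
  exact foldl_update_congr xs a _ _ s s' (Or.inl ⟨i, List.mem_finRange i, rfl⟩)

lemma updVec_not_mem {xs : Fin k → ℕ} {a : Fin k → M} (s : ℕ → M) {y : ℕ}
    (h : y ∉ Set.range xs) : updVec s xs a y = s y :=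
  foldl_update_notmem xs a y _ s (fun i _ hi => h ⟨i, hi⟩)

lemma updVec_apply {xs : Fin k → ℕ} (hinj : Function.Injective xs)
    (s : ℕ → M) (a : Fin k → M) (i : Fin k) : updVec s xs a (xs i) = a i :=
  foldl_update_apply xs a i _ s (List.mem_finRange i) (fun _ _ h => hinj h)

lemma updVec_tup {xs : Fin k → ℕ} (hinj : Function.Injective xs)
    (s : ℕ → M) (a : Fin k → M) : (fun i => updVec s xs a (xs i)) = a :=
  funext fun i => updVec_apply hinj s a i

lemma updVec_single (s : ℕ → M) (y : ℕ) (b : Fin 1 → M) :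
    updVec s (fun _ => y) b = Function.update s y (b 0) := rfl

lemma agree_team {xs : Fin k → ℕ} (hinj : Function.Injective xs)
    (s₀ s : ℕ → M) {y : ℕ} (hy : y ∈ Set.range xs) :
    updVec s₀ xs (fun i => s (xs i)) y = s y := by
  obtain ⟨i, rfl⟩ := hy
  exact updVec_apply hinj s₀ _ i

end updVec

end TeamSemantics
namespace TeamSemantics

open FirstOrder

variable {L : FirstOrder.Language.{0, 0}} {kq : ℕ}

/-- Embed a first-order term into extended terms. -/
def ETerm.ofTerm : L.Term ℕ → ETerm L
  | .var x => .var x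
  | .func f ts => .func f (fun i => ETerm.ofTerm (ts i))

lemma ETerm.eval_ofTerm {M : Type u} [L.Structure M] (Fa : FAssign M) (s : ℕ → M) :
    ∀ t : L.Term ℕ, (ETerm.ofTerm t).eval Fa s = t.realize s
  | .var _ => rfl
  | .func f ts => by
      simp only [ETerm.ofTerm, ETerm.eval, Language.Term.realize]
      congr 1; funext i; exact ETerm.eval_ofTerm Fa s (ts i)

lemma ETerm.ffvars_ofTerm : ∀ t : L.Term ℕ, (ETerm.ofTerm t).ffvars = ∅
  | .var _ => rfl
  | .func f ts => by
      simp only [ETerm.ofTerm, ETerm.ffvars]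
      simp [fun i => ETerm.ffvars_ofTerm (ts i)]

lemma ETerm.fovars_ofTerm : ∀ t : L.Term ℕ, (ETerm.ofTerm t).fovars = tvarSet t
  | .var _ => rfl
  | .func f ts => by
      simp only [ETerm.ofTerm, ETerm.fovars, tvarSet]
      exact Set.iUnion_congr fun i => ETerm.fovars_ofTerm (ts i)

lemma realize_congr {M : Type u} [L.Structure M] {s s' : ℕ → M} :
    ∀ t : L.Term ℕ, (∀ x ∈ tvarSet t, s x = s' x) → t.realize s = t.realize s'
  | .var x, h => h x rfl
  | .func f ts, h => by
      simp only [Language.Term.realize]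
      congr 1; funext i
      exact realize_congr (ts i) fun x hx => h x (Set.mem_iUnion.2 ⟨i, hx⟩)

section assign

variable {M : Type u}

lemma RAssign.set_eq (ρ : RAssign M) (n name : ℕ) (R : Set (Fin n → M)) :
    (ρ.set n name R) n name = R := by
  simp [RAssign.set]

lemma RAssign.set_ne (ρ : RAssign M) {n name n' name' : ℕ} (R : Set (Fin n → M))
    (h : ¬(n' = n ∧ name' = name)) : (ρ.set n name R) n' name' = ρ n' name' :=
  dif_neg h

lemma FAssign.set_eq (Fa : FAssign M) (n name : ℕ) (g : (Fin n → M) → M) :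
    (Fa.set n name g) n name = g := by
  simp [FAssign.set]

lemma FAssign.set_ne (Fa : FAssign M) {n name n' name' : ℕ} (g : (Fin n → M) → M)
    (h : ¬(n' = n ∧ name' = name)) : (Fa.set n name g) n' name' = Fa n' name' :=
  dif_neg h

end assign

/-- All positively occurring relation-variable names and all `exrel` binder names
are `> m`. -/
def EForm.RNamesGT (m : ℕ) : EForm L kq → Prop
  | .rel _ _ => True
  | .nrel _ _ => True
  | .eEq _ _ => True
  | .eNe _ _ => True
  | .rvar _ name _ => m < name
  | .nrvar _ _ _ => True
  | .and φ ψ => EForm.RNamesGT m φ ∧ EForm.RNamesGT m ψ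
  | .or φ ψ => EForm.RNamesGT m φ ∧ EForm.RNamesGT m ψ
  | .ex _ φ => EForm.RNamesGT m φ
  | .all _ φ => EForm.RNamesGT m φ
  | .qu _ φ => EForm.RNamesGT m φ
  | .exrel _ name φ => m < name ∧ EForm.RNamesGT m φ
  | .exfun _ _ φ => EForm.RNamesGT m φ

lemma EForm.RNamesGT.mono {m m' : ℕ} (h : m ≤ m') :
    ∀ (ψ : EForm L kq), ψ.RNamesGT m' → ψ.RNamesGT m
  | .rel _ _, _ => trivial
  | .nrel _ _, _ => trivial
  | .eEq _ _, _ => trivial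
  | .eNe _ _, _ => trivial
  | .rvar _ _ _, hh => lt_of_le_of_lt h hh
  | .nrvar _ _ _, _ => trivial
  | .and _ _, hh => ⟨EForm.RNamesGT.mono h _ hh.1, EForm.RNamesGT.mono h _ hh.2⟩
  | .or _ _, hh => ⟨EForm.RNamesGT.mono h _ hh.1, EForm.RNamesGT.mono h _ hh.2⟩
  | .ex _ φ, hh => EForm.RNamesGT.mono h φ hh
  | .all _ φ, hh => EForm.RNamesGT.mono h φ hh
  | .qu _ φ, hh => EForm.RNamesGT.mono h φ hh
  | .exrel _ _ _, hh => ⟨lt_of_le_of_lt h hh.1, EForm.RNamesGT.mono h _ hh.2⟩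
  | .exfun _ _ φ, hh => EForm.RNamesGT.mono h φ hh

lemma EForm.RNamesGT.onlyNeg {m : ℕ} (r : ℕ) :
    ∀ (ψ : EForm L kq), ψ.RNamesGT m → ψ.OnlyNeg r m
  | .rel _ _, _ => trivial
  | .nrel _ _, _ => trivial
  | .eEq _ _, _ => trivial
  | .eNe _ _, _ => trivial
  | .rvar _ name _, hh => fun hc => by rw [hc.2] at hh; exact lt_irrefl m hh
  | .nrvar _ _ _, _ => trivial
  | .and _ _, hh => ⟨EForm.RNamesGT.onlyNeg r _ hh.1, EForm.RNamesGT.onlyNeg r _ hh.2⟩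
  | .or _ _, hh => ⟨EForm.RNamesGT.onlyNeg r _ hh.1, EForm.RNamesGT.onlyNeg r _ hh.2⟩
  | .ex _ φ, hh => EForm.RNamesGT.onlyNeg r φ hh
  | .all _ φ, hh => EForm.RNamesGT.onlyNeg r φ hh
  | .qu _ φ, hh => EForm.RNamesGT.onlyNeg r φ hh
  | .exrel _ _ _, hh => ⟨fun hc => by have := hh.1; rw [hc.2] at this; exact lt_irrefl m this, EForm.RNamesGT.onlyNeg r _ hh.2⟩
  | .exfun _ _ φ, hh => EForm.RNamesGT.onlyNeg r φ hh

end TeamSemantics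
namespace TeamSemantics

open FirstOrder

variable {L : FirstOrder.Language.{0, 0}} {kq : ℕ}

/-- Universal first-order quantification over a tuple of variables. -/
def allVec : ∀ {k : ℕ}, (Fin k → ℕ) → EForm L kq → EForm L kq
  | 0, _, ψ => ψ
  | _ + 1, xs, ψ => .all (xs 0) (allVec (Fin.tail xs) ψ)

lemma updVec_succ {M : Type u} {k : ℕ} (s : ℕ → M) (xs : Fin (k + 1) → ℕ)
    (a : Fin (k + 1) → M) :
    updVec s xs a = updVec (Function.update s (xs 0) (a 0)) (Fin.tail xs) (Fin.tail a) := by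
  simp only [updVec, List.finRange_succ, List.foldl_cons, List.foldl_map]
  rfl

lemma updVec_zero {M : Type u} (s : ℕ → M) (xs : Fin 0 → ℕ) (a : Fin 0 → M) :
    updVec s xs a = s := rfl

lemma ESat_allVec {M : Type u} [L.Structure M] (Q : Quant.{u} kq)
    (ρ : RAssign M) (Fa : FAssign M) :
    ∀ {k : ℕ} (xs : Fin k → ℕ) (ψ : EForm L kq) (s : ℕ → M),
      ESat Q M ρ Fa s (allVec xs ψ) ↔ ∀ a : Fin k → M, ESat Q M ρ Fa (updVec s xs a) ψ := by
  intro k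
  induction k with
  | zero =>
    intro xs ψ s
    simp only [allVec, updVec_zero]
    exact ⟨fun h _ => h, fun h => h (fun i => i.elim0)⟩
  | succ k ih =>
    intro xs ψ s
    simp only [allVec, ESat]
    constructor
    · intro h a
      rw [updVec_succ]
      exact (ih (Fin.tail xs) ψ _).1 (h (a 0)) (Fin.tail a)
    · intro h b
      rw [ih]
      intro a'
      have := h (Fin.cons b a')
      rwa [updVec_succ, Fin.cons_zero, Fin.tail_cons] at this

lemma fv_allVec : ∀ {k : ℕ} (xs : Fin k → ℕ) (ψ : EForm L kq),
    (allVec xs ψ).fv = ψ.fv \ Set.range xs := by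
  intro k
  induction k with
  | zero => intro xs ψ; simp [allVec, Set.range_eq_empty]
  | succ k ih =>
    intro xs ψ
    show ((allVec (Fin.tail xs) ψ).fv \ {xs 0}) = _
    rw [ih, Set.diff_diff]
    congr 1
    rw [← Fin.cons_self_tail xs, Fin.range_cons]
    rw [Fin.cons_self_tail]
    ext x; simp [or_comm]

lemma freeRVars_allVec : ∀ {k : ℕ} (xs : Fin k → ℕ) (ψ : EForm L kq),
    (allVec xs ψ).freeRVars = ψ.freeRVars := by
  intro k
  induction k with
  | zero => intro _ _; rfl
  | succ k ih => intro xs ψ; exact ih (Fin.tail xs) ψ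

lemma freeFVars_allVec : ∀ {k : ℕ} (xs : Fin k → ℕ) (ψ : EForm L kq),
    (allVec xs ψ).freeFVars = ψ.freeFVars := by
  intro k
  induction k with
  | zero => intro _ _; rfl
  | succ k ih => intro xs ψ; exact ih (Fin.tail xs) ψ

lemma RNamesGT_allVec {m : ℕ} : ∀ {k : ℕ} (xs : Fin k → ℕ) (ψ : EForm L kq),
    ψ.RNamesGT m → (allVec xs ψ).RNamesGT m := by
  intro k
  induction k with
  | zero => intro _ _ h; exact h
  | succ k ih => intro xs ψ h; exact ih (Fin.tail xs) ψ h

end TeamSemantics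
namespace TeamSemantics

open FirstOrder

variable {L : FirstOrder.Language.{0, 0}} {kq : ℕ}

lemma ETerm.eval_congr {M : Type u} [L.Structure M] :
    ∀ (t : ETerm L) {Fa Fa' : FAssign M} {s s' : ℕ → M},
      (∀ p ∈ t.ffvars, Fa p.1 p.2 = Fa' p.1 p.2) → (∀ x ∈ t.fovars, s x = s' x) →
      t.eval Fa s = t.eval Fa' s'
  | .var x, _, _, _, _, _, hs => hs x rfl
  | .func f ts, _, _, _, _, hF, hs => by
      simp only [ETerm.eval]
      congr 1; funext i
      exact ETerm.eval_congr (ts i)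
        (fun p hp => hF p (Set.mem_iUnion.2 ⟨i, hp⟩))
        (fun x hx => hs x (Set.mem_iUnion.2 ⟨i, hx⟩))
  | .fvar n name ts, Fa, Fa', _, _, hF, hs => by
      simp only [ETerm.eval]
      have hname : Fa n name = Fa' n name :=
        hF (n, name) (Set.mem_insert _ _)
      rw [hname]
      congr 1; funext i
      exact ETerm.eval_congr (ts i)
        (fun p hp => hF p (Set.mem_insert_iff.2 (Or.inr (Set.mem_iUnion.2 ⟨i, hp⟩))))
        (fun x hx => hs x (Set.mem_iUnion.2 ⟨i, hx⟩))

lemma ESat_congr {M : Type u} [L.Structure M] (Q : Quant.{u} kq) :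
    ∀ (ψ : EForm L kq) {ρ ρ' : RAssign M} {Fa Fa' : FAssign M} {s s' : ℕ → M},
      (∀ p ∈ ψ.freeRVars, ρ p.1 p.2 = ρ' p.1 p.2) →
      (∀ p ∈ ψ.freeFVars, Fa p.1 p.2 = Fa' p.1 p.2) →
      (∀ x ∈ ψ.fv, s x = s' x) →
      (ESat Q M ρ Fa s ψ ↔ ESat Q M ρ' Fa' s' ψ)
  | .rel R ts, ρ, ρ', Fa, Fa', s, s', hρ, hF, hs => by
      simp only [ESat]
      have : (fun i => (ts i).eval Fa s) = fun i => (ts i).eval Fa' s' := by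
        funext i
        exact ETerm.eval_congr (ts i) (fun p hp => hF p (Set.mem_iUnion.2 ⟨i, hp⟩))
          (fun x hx => hs x (Set.mem_iUnion.2 ⟨i, hx⟩))
      rw [this]
  | .nrel R ts, ρ, ρ', Fa, Fa', s, s', hρ, hF, hs => by
      simp only [ESat]
      have : (fun i => (ts i).eval Fa s) = fun i => (ts i).eval Fa' s' := by
        funext i
        exact ETerm.eval_congr (ts i) (fun p hp => hF p (Set.mem_iUnion.2 ⟨i, hp⟩))
          (fun x hx => hs x (Set.mem_iUnion.2 ⟨i, hx⟩))
      rw [this]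
  | .eEq t t', ρ, ρ', Fa, Fa', s, s', hρ, hF, hs => by
      simp only [ESat]
      rw [ETerm.eval_congr t (fun p hp => hF p (Or.inl hp)) (fun x hx => hs x (Or.inl hx)),
        ETerm.eval_congr t' (fun p hp => hF p (Or.inr hp)) (fun x hx => hs x (Or.inr hx))]
  | .eNe t t', ρ, ρ', Fa, Fa', s, s', hρ, hF, hs => by
      simp only [ESat]
      rw [ETerm.eval_congr t (fun p hp => hF p (Or.inl hp)) (fun x hx => hs x (Or.inl hx)),
        ETerm.eval_congr t' (fun p hp => hF p (Or.inr hp)) (fun x hx => hs x (Or.inr hx))]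
  | .rvar n name ts, ρ, ρ', Fa, Fa', s, s', hρ, hF, hs => by
      simp only [ESat]
      have h1 : ρ n name = ρ' n name := hρ (n, name) rfl
      have : (fun i => (ts i).eval Fa s) = fun i => (ts i).eval Fa' s' := by
        funext i
        exact ETerm.eval_congr (ts i) (fun p hp => hF p (Set.mem_iUnion.2 ⟨i, hp⟩))
          (fun x hx => hs x (Set.mem_iUnion.2 ⟨i, hx⟩))
      rw [this, h1]
  | .nrvar n name ts, ρ, ρ', Fa, Fa', s, s', hρ, hF, hs => by
      simp only [ESat]
      have h1 : ρ n name = ρ' n name := hρ (n, name) rfl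
      have : (fun i => (ts i).eval Fa s) = fun i => (ts i).eval Fa' s' := by
        funext i
        exact ETerm.eval_congr (ts i) (fun p hp => hF p (Set.mem_iUnion.2 ⟨i, hp⟩))
          (fun x hx => hs x (Set.mem_iUnion.2 ⟨i, hx⟩))
      rw [this, h1]
  | .and φ ψ, ρ, ρ', Fa, Fa', s, s', hρ, hF, hs => by
      simp only [ESat]
      rw [ESat_congr Q φ (fun p hp => hρ p (Or.inl hp)) (fun p hp => hF p (Or.inl hp))
          (fun x hx => hs x (Or.inl hx)),
        ESat_congr Q ψ (fun p hp => hρ p (Or.inr hp)) (fun p hp => hF p (Or.inr hp))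
          (fun x hx => hs x (Or.inr hx))]
  | .or φ ψ, ρ, ρ', Fa, Fa', s, s', hρ, hF, hs => by
      simp only [ESat]
      rw [ESat_congr Q φ (fun p hp => hρ p (Or.inl hp)) (fun p hp => hF p (Or.inl hp))
          (fun x hx => hs x (Or.inl hx)),
        ESat_congr Q ψ (fun p hp => hρ p (Or.inr hp)) (fun p hp => hF p (Or.inr hp))
          (fun x hx => hs x (Or.inr hx))]
  | .ex y φ, ρ, ρ', Fa, Fa', s, s', hρ, hF, hs => by
      simp only [ESat]
      apply exists_congr; intro a
      apply ESat_congr Q φ hρ hF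
      intro x hx
      rcases eq_or_ne x y with rfl | hne
      · simp
      · rw [Function.update_of_ne hne, Function.update_of_ne hne]
        exact hs x ⟨hx, hne⟩
  | .all y φ, ρ, ρ', Fa, Fa', s, s', hρ, hF, hs => by
      simp only [ESat]
      apply forall_congr'; intro a
      apply ESat_congr Q φ hρ hF
      intro x hx
      rcases eq_or_ne x y with rfl | hne
      · simp
      · rw [Function.update_of_ne hne, Function.update_of_ne hne]
        exact hs x ⟨hx, hne⟩
  | .qu zs φ, ρ, ρ', Fa, Fa', s, s', hρ, hF, hs => by
      simp only [ESat]
      have : {a : Fin kq → M | ESat Q M ρ Fa (updVec s zs a) φ} =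
          {a : Fin kq → M | ESat Q M ρ' Fa' (updVec s' zs a) φ} := by
        ext a
        apply ESat_congr Q φ hρ hF
        intro x hx
        by_cases hxz : x ∈ Set.range zs
        · exact updVec_mem s s' hxz
        · rw [updVec_not_mem s hxz, updVec_not_mem s' hxz]
          exact hs x ⟨hx, hxz⟩
      rw [this]
  | .exrel n name φ, ρ, ρ', Fa, Fa', s, s', hρ, hF, hs => by
      simp only [ESat]
      apply exists_congr; intro R
      apply ESat_congr Q φ ?_ hF hs
      intro p hp
      by_cases hc : p.1 = n ∧ p.2 = name
      · obtain ⟨p1, p2⟩ := p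
        simp only at hc
        obtain ⟨rfl, rfl⟩ := hc
        rw [RAssign.set_eq, RAssign.set_eq]
      · rw [RAssign.set_ne _ _ hc, RAssign.set_ne _ _ hc]
        exact hρ p ⟨hp, fun hpe => hc (by rw [hpe]; exact ⟨rfl, rfl⟩)⟩
  | .exfun n name φ, ρ, ρ', Fa, Fa', s, s', hρ, hF, hs => by
      simp only [ESat]
      apply exists_congr; intro g
      apply ESat_congr Q φ hρ ?_ hs
      intro p hp
      by_cases hc : p.1 = n ∧ p.2 = name
      · obtain ⟨p1, p2⟩ := p
        simp only at hc
        obtain ⟨rfl, rfl⟩ := hc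
        rw [FAssign.set_eq, FAssign.set_eq]
      · rw [FAssign.set_ne _ _ hc, FAssign.set_ne _ _ hc]
        exact hF p ⟨hp, fun hpe => hc (by rw [hpe]; exact ⟨rfl, rfl⟩)⟩

end TeamSemantics
namespace TeamSemantics

open FirstOrder

variable {L : FirstOrder.Language.{0, 0}} {kq : ℕ}

/-- If the relation variable `(r, name)` occurs only negatively, satisfaction is
antitone in its interpretation (for monotone `Q`). -/
lemma ESat_anti {M : Type u} [L.Structure M] {Q : Quant.{u} kq} (hQ : Q.Mono)
    {r name : ℕ} :
    ∀ (ψ : EForm L kq), ψ.OnlyNeg r name →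
      ∀ {ρ ρ' : RAssign M} {Fa : FAssign M} {s : ℕ → M},
        (∀ n nm, ¬(n = r ∧ nm = name) → ρ n nm = ρ' n nm) →
        (ρ' r name ⊆ ρ r name) →
        ESat Q M ρ Fa s ψ → ESat Q M ρ' Fa s ψ
  | .rel R ts, _, ρ, ρ', Fa, s, hoff, hsub, h => h
  | .nrel R ts, _, ρ, ρ', Fa, s, hoff, hsub, h => h
  | .eEq t t', _, ρ, ρ', Fa, s, hoff, hsub, h => h
  | .eNe t t', _, ρ, ρ', Fa, s, hoff, hsub, h => h
  | .rvar n nm ts, hneg, ρ, ρ', Fa, s, hoff, hsub, h => by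
      simp only [ESat] at h ⊢
      rwa [← hoff n nm hneg]
  | .nrvar n nm ts, _, ρ, ρ', Fa, s, hoff, hsub, h => by
      simp only [ESat] at h ⊢
      by_cases hc : n = r ∧ nm = name
      · obtain ⟨rfl, rfl⟩ := hc
        exact fun hmem => h (hsub hmem)
      · rwa [← hoff n nm hc]
  | .and φ ψ, hneg, ρ, ρ', Fa, s, hoff, hsub, h =>
      ⟨ESat_anti hQ φ hneg.1 hoff hsub h.1, ESat_anti hQ ψ hneg.2 hoff hsub h.2⟩
  | .or φ ψ, hneg, ρ, ρ', Fa, s, hoff, hsub, h =>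
      h.imp (ESat_anti hQ φ hneg.1 hoff hsub) (ESat_anti hQ ψ hneg.2 hoff hsub)
  | .ex y φ, hneg, ρ, ρ', Fa, s, hoff, hsub, h =>
      h.imp fun a => ESat_anti hQ φ hneg hoff hsub
  | .all y φ, hneg, ρ, ρ', Fa, s, hoff, hsub, h =>
      fun a => ESat_anti hQ φ hneg hoff hsub (h a)
  | .qu zs φ, hneg, ρ, ρ', Fa, s, hoff, hsub, h => by
      simp only [ESat] at h ⊢
      exact hQ M _ _ h (fun a ha => ESat_anti hQ φ hneg hoff hsub ha)
  | .exrel n nm φ, hneg, ρ, ρ', Fa, s, hoff, hsub, h => by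
      simp only [ESat] at h ⊢
      obtain ⟨R, hR⟩ := h
      refine ⟨R, ESat_anti hQ φ hneg.2 ?_ ?_ hR⟩
      · intro n' nm' h'
        by_cases hc : n' = n ∧ nm' = nm
        · obtain ⟨rfl, rfl⟩ := hc
          rw [RAssign.set_eq, RAssign.set_eq]
        · rw [RAssign.set_ne _ _ hc, RAssign.set_ne _ _ hc]
          exact hoff n' nm' h'
      · have hne : ¬(r = n ∧ name = nm) := fun hc => hneg.1 ⟨hc.1.symm, hc.2.symm⟩
        rw [RAssign.set_ne _ _ hne, RAssign.set_ne _ _ hne]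
        exact hsub
  | .exfun n nm φ, hneg, ρ, ρ', Fa, s, hoff, hsub, h => by
      simp only [ESat] at h ⊢
      obtain ⟨g, hg⟩ := h
      exact ⟨g, ESat_anti hQ φ hneg hoff hsub hg⟩

end TeamSemantics
namespace TeamSemantics

open FirstOrder

variable {L : FirstOrder.Language.{0, 0}} {kq : ℕ}

section relOf

variable {M : Type u} {k : ℕ}

lemma mem_relOf {xs : Fin k → ℕ} {X : Set (ℕ → M)} {s : ℕ → M} (hs : s ∈ X) :
    (fun i => s (xs i)) ∈ relOf xs X :=
  ⟨s, hs, rfl⟩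

lemma relOf_union (xs : Fin k → ℕ) (Y Z : Set (ℕ → M)) :
    relOf xs (Y ∪ Z) = relOf xs Y ∪ relOf xs Z :=
  Set.image_union _ Y Z

lemma relOf_empty_iff (xs : Fin k → ℕ) (X : Set (ℕ → M)) :
    relOf xs X = ∅ ↔ X = ∅ :=
  Set.image_eq_empty

end relOf

/-- The main "guard" construct: `∀x̄ (¬R(x̄) ∨ body)`. -/
def clause (k m : ℕ) (xs : Fin k → ℕ) (body : EForm L kq) : EForm L kq :=
  allVec xs (.or (.nrvar k m (fun i => .var (xs i))) body)

lemma ESat_clause {M : Type u} [L.Structure M] (Q : Quant.{u} kq)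
    {k m : ℕ} {xs : Fin k → ℕ} (hinj : Function.Injective xs)
    (ρ : RAssign M) (Fa : FAssign M) (s : ℕ → M) (body : EForm L kq) :
    ESat Q M ρ Fa s (clause k m xs body) ↔
      ∀ a : Fin k → M, a ∈ ρ k m → ESat Q M ρ Fa (updVec s xs a) body := by
  rw [clause, ESat_allVec]
  apply forall_congr'; intro a
  show (¬ _ ∨ _) ↔ _
  have : (fun i => (ETerm.var (xs i) : ETerm L).eval Fa (updVec s xs a)) = a := by
    funext i
    exact updVec_apply hinj s a i
  rw [this]
  exact or_iff_not_imp_left.trans (by rw [not_not])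

lemma fv_clause {k m : ℕ} (xs : Fin k → ℕ) (body : EForm L kq) :
    (clause k m xs body).fv = (Set.range xs ∪ body.fv) \ Set.range xs := by
  rw [clause, fv_allVec]
  congr 1
  show (⋃ i, (ETerm.var (xs i) : ETerm L).fovars) ∪ _ = _
  congr 1
  ext x
  simp [ETerm.fovars]

lemma fv_clause_empty {k m : ℕ} (xs : Fin k → ℕ) {body : EForm L kq}
    (h : body.fv ⊆ Set.range xs) : (clause k m xs body).fv = ∅ := by
  rw [fv_clause]
  rw [Set.diff_eq_empty]
  exact Set.union_subset (le_refl _) h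

lemma freeRVars_clause {k m : ℕ} (xs : Fin k → ℕ) (body : EForm L kq) :
    (clause k m xs body).freeRVars = {(k, m)} ∪ body.freeRVars := by
  rw [clause, freeRVars_allVec]; rfl

lemma freeFVars_clause {k m : ℕ} (xs : Fin k → ℕ) (body : EForm L kq) :
    (clause k m xs body).freeFVars = body.freeFVars := by
  rw [clause, freeFVars_allVec]
  show (⋃ i, (ETerm.var (xs i) : ETerm L).ffvars) ∪ _ = _
  simp [ETerm.ffvars]

lemma RNamesGT_clause {k m : ℕ} (xs : Fin k → ℕ) {body : EForm L kq}
    (h : body.RNamesGT m) : (clause k m xs body).RNamesGT m :=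
  RNamesGT_allVec _ _ ⟨trivial, h⟩

/-- Enumeration of the union of the ranges of two tuples of variables. -/
lemma exists_sup {k l : ℕ} (xs : Fin k → ℕ) (zs : Fin l → ℕ) :
    ∃ (n : ℕ) (e : Fin n → ℕ), Function.Injective e ∧
      Set.range e = Set.range xs ∪ Set.range zs := by
  classical
  set S : Finset ℕ := Finset.image xs Finset.univ ∪ Finset.image zs Finset.univ with hS
  refine ⟨S.card, fun i => (S.orderIsoOfFin rfl i : ℕ), ?_, ?_⟩
  · intro i j hij
    exact (S.orderIsoOfFin rfl).injective (Subtype.ext hij)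
  · have : Set.range (fun i => ((S.orderIsoOfFin rfl i : ℕ))) = ↑S := by
      ext x
      constructor
      · rintro ⟨i, rfl⟩; exact (S.orderIsoOfFin rfl i).2
      · intro hx
        exact ⟨(S.orderIsoOfFin rfl).symm ⟨x, hx⟩, by simp⟩
    rw [this, hS]
    simp [Set.image_univ]

/-- Key tuple correspondence for the quantifier cases. -/
lemma tuple_key {M : Type u} {k l n : ℕ} {xs : Fin k → ℕ} {zs : Fin l → ℕ}
    {e : Fin n → ℕ} (he : Set.range e ⊆ Set.range xs ∪ Set.range zs)
    {s t : ℕ → M} (hst : ∀ j, s (xs j) = t (xs j)) (b : Fin l → M) :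
    (fun i => updVec s zs b (e i)) = fun i => updVec t zs b (e i) := by
  funext i
  by_cases hz : e i ∈ Set.range zs
  · exact updVec_mem s t hz
  · rw [updVec_not_mem s hz, updVec_not_mem t hz]
    rcases he (Set.mem_range_self i) with ⟨j, hj⟩ | hmem
    · rw [← hj]; exact hst j
    · exact absurd hmem hz

end TeamSemantics
namespace TeamSemantics

open FirstOrder

variable {L : FirstOrder.Language.{0, 0}} {kq : ℕ}

theorem main_trans (Q : Quant.{u} kq) (hQ : Q.Mono) :
    ∀ (φ : TForm L kq), φ.IsDQ →
    ∀ (k : ℕ) (xs : Fin k → ℕ), Function.Injective xs → φ.FV ⊆ Set.range xs →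
    ∀ (m : ℕ),
    ∃ ψ : EForm L kq, ψ.fv = ∅ ∧ ψ.freeRVars ⊆ {(k, m)} ∧ ψ.freeFVars = ∅ ∧
      ψ.RNamesGT m ∧
      ∀ (M : Type u) [L.Structure M], Nonempty M →
        ∀ (ρ : RAssign M) (Fa : FAssign M) (s₀ : ℕ → M) (X : Set (ℕ → M)),
          TSat Q M φ X ↔ ESat Q M (ρ.set k m (relOf xs X)) Fa s₀ ψ := by
  intro φ
  induction φ with
  | @rel n R ts =>
    intro hD k xs hinj hfv m
    refine ⟨clause k m xs (.rel R fun i => ETerm.ofTerm (ts i)), ?_, ?_, ?_, ?_, ?_⟩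
    · apply fv_clause_empty
      show (⋃ i, (ETerm.ofTerm (ts i)).fovars) ⊆ _
      rw [Set.iUnion_congr fun i => ETerm.fovars_ofTerm (ts i)]
      exact hfv
    · rw [freeRVars_clause]
      show {(k, m)} ∪ (∅ : Set (ℕ × ℕ)) ⊆ {(k, m)}
      simp
    · rw [freeFVars_clause]
      show (⋃ i, (ETerm.ofTerm (ts i)).ffvars) = ∅
      simp [ETerm.ffvars_ofTerm]
    · exact RNamesGT_clause _ trivial
    · intro M inst hne ρ Fa s₀ X
      rw [ESat_clause Q hinj]
      simp only [TSat, ESat, RAssign.set_eq, ETerm.eval_ofTerm]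
      have key : ∀ s : ℕ → M, s ∈ X →
          (fun i => (ts i).realize (updVec s₀ xs fun j => s (xs j))) =
          fun i => (ts i).realize s := by
        intro s hs
        funext i
        exact realize_congr (ts i) fun x hx =>
          agree_team hinj s₀ s (hfv (Set.mem_iUnion.2 ⟨i, hx⟩))
      constructor
      · intro h a ha
        obtain ⟨s, hs, rfl⟩ := ha
        rw [key s hs]
        exact h s hs
      · intro h s hs
        have := h (fun i => s (xs i)) (mem_relOf hs)
        rwa [key s hs] at this
  | @nrel n R ts =>
    intro hD k xs hinj hfv m
    refine ⟨clause k m xs (.nrel R fun i => ETerm.ofTerm (ts i)), ?_, ?_, ?_, ?_, ?_⟩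
    · apply fv_clause_empty
      show (⋃ i, (ETerm.ofTerm (ts i)).fovars) ⊆ _
      rw [Set.iUnion_congr fun i => ETerm.fovars_ofTerm (ts i)]
      exact hfv
    · rw [freeRVars_clause]
      show {(k, m)} ∪ (∅ : Set (ℕ × ℕ)) ⊆ {(k, m)}
      simp
    · rw [freeFVars_clause]
      show (⋃ i, (ETerm.ofTerm (ts i)).ffvars) = ∅
      simp [ETerm.ffvars_ofTerm]
    · exact RNamesGT_clause _ trivial
    · intro M inst hne ρ Fa s₀ X
      rw [ESat_clause Q hinj]
      simp only [TSat, ESat, RAssign.set_eq, ETerm.eval_ofTerm]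
      have key : ∀ s : ℕ → M, s ∈ X →
          (fun i => (ts i).realize (updVec s₀ xs fun j => s (xs j))) =
          fun i => (ts i).realize s := by
        intro s hs
        funext i
        exact realize_congr (ts i) fun x hx =>
          agree_team hinj s₀ s (hfv (Set.mem_iUnion.2 ⟨i, hx⟩))
      constructor
      · intro h a ha
        obtain ⟨s, hs, rfl⟩ := ha
        rw [key s hs]
        exact h s hs
      · intro h s hs
        have := h (fun i => s (xs i)) (mem_relOf hs)
        rwa [key s hs] at this
  | tEq t t' =>
    intro hD k xs hinj hfv m
    refine ⟨clause k m xs (.eEq (ETerm.ofTerm t) (ETerm.ofTerm t')), ?_, ?_, ?_, ?_, ?_⟩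
    · apply fv_clause_empty
      show (ETerm.ofTerm t).fovars ∪ (ETerm.ofTerm t').fovars ⊆ _
      rw [ETerm.fovars_ofTerm, ETerm.fovars_ofTerm]
      exact hfv
    · rw [freeRVars_clause]
      show {(k, m)} ∪ (∅ : Set (ℕ × ℕ)) ⊆ {(k, m)}
      simp
    · rw [freeFVars_clause]
      show (ETerm.ofTerm t).ffvars ∪ (ETerm.ofTerm t').ffvars = ∅
      simp [ETerm.ffvars_ofTerm]
    · exact RNamesGT_clause _ trivial
    · intro M inst hne ρ Fa s₀ X
      rw [ESat_clause Q hinj]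
      simp only [TSat, ESat, RAssign.set_eq, ETerm.eval_ofTerm]
      have key : ∀ (u : L.Term ℕ), tvarSet u ⊆ TForm.FV (TForm.tEq (L := L) (k := kq) t t') →
          ∀ s : ℕ → M, s ∈ X →
          u.realize (updVec s₀ xs fun j => s (xs j)) = u.realize s := by
        intro u hu s hs
        exact realize_congr u fun x hx => agree_team hinj s₀ s (hfv (hu hx))
      constructor
      · intro h a ha
        obtain ⟨s, hs, rfl⟩ := ha
        rw [key t (fun x hx => Or.inl hx) s hs, key t' (fun x hx => Or.inr hx) s hs]
        exact h s hs
      · intro h s hs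
        have := h (fun i => s (xs i)) (mem_relOf hs)
        rwa [key t (fun x hx => Or.inl hx) s hs,
          key t' (fun x hx => Or.inr hx) s hs] at this
  | tNe t t' =>
    intro hD k xs hinj hfv m
    refine ⟨clause k m xs (.eNe (ETerm.ofTerm t) (ETerm.ofTerm t')), ?_, ?_, ?_, ?_, ?_⟩
    · apply fv_clause_empty
      show (ETerm.ofTerm t).fovars ∪ (ETerm.ofTerm t').fovars ⊆ _
      rw [ETerm.fovars_ofTerm, ETerm.fovars_ofTerm]
      exact hfv
    · rw [freeRVars_clause]
      show {(k, m)} ∪ (∅ : Set (ℕ × ℕ)) ⊆ {(k, m)}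
      simp
    · rw [freeFVars_clause]
      show (ETerm.ofTerm t).ffvars ∪ (ETerm.ofTerm t').ffvars = ∅
      simp [ETerm.ffvars_ofTerm]
    · exact RNamesGT_clause _ trivial
    · intro M inst hne ρ Fa s₀ X
      rw [ESat_clause Q hinj]
      simp only [TSat, ESat, RAssign.set_eq, ETerm.eval_ofTerm]
      have key : ∀ (u : L.Term ℕ), tvarSet u ⊆ TForm.FV (TForm.tNe (L := L) (k := kq) t t') →
          ∀ s : ℕ → M, s ∈ X →
          u.realize (updVec s₀ xs fun j => s (xs j)) = u.realize s := by
        intro u hu s hs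
        exact realize_congr u fun x hx => agree_team hinj s₀ s (hfv (hu hx))
      constructor
      · intro h a ha
        obtain ⟨s, hs, rfl⟩ := ha
        rw [key t (fun x hx => Or.inl hx) s hs, key t' (fun x hx => Or.inr hx) s hs]
        exact h s hs
      · intro h s hs
        have := h (fun i => s (xs i)) (mem_relOf hs)
        rwa [key t (fun x hx => Or.inl hx) s hs,
          key t' (fun x hx => Or.inr hx) s hs] at this
  | @dep n ts t =>
    intro hD k xs hinj hfv m
    refine ⟨.exfun n 0 (clause k m xs
      (.eEq (ETerm.ofTerm t) (.fvar n 0 fun i => ETerm.ofTerm (ts i)))), ?_, ?_, ?_, ?_, ?_⟩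
    · show (clause k m xs _).fv = ∅
      apply fv_clause_empty
      show (ETerm.ofTerm t).fovars ∪ (⋃ i, (ETerm.ofTerm (ts i)).fovars) ⊆ _
      rw [ETerm.fovars_ofTerm, Set.iUnion_congr fun i => ETerm.fovars_ofTerm (ts i)]
      intro x hx
      rcases hx with hx | hx
      · exact hfv (Or.inr hx)
      · exact hfv (Or.inl hx)
    · show (clause k m xs _).freeRVars ⊆ _
      rw [freeRVars_clause]
      show {(k, m)} ∪ (∅ : Set (ℕ × ℕ)) ⊆ {(k, m)}
      simp
    · show (clause k m xs _).freeFVars \ {(n, 0)} = ∅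
      rw [freeFVars_clause]
      show ((ETerm.ofTerm t).ffvars ∪
        insert ((n : ℕ), (0 : ℕ)) (⋃ i, (ETerm.ofTerm (ts i)).ffvars)) \ {(n, 0)} = ∅
      rw [ETerm.ffvars_ofTerm, Set.iUnion_congr fun i => ETerm.ffvars_ofTerm (ts i)]
      simp
    · exact RNamesGT_clause _ trivial
    · intro M inst hne ρ Fa s₀ X
      have hts : ∀ (i : Fin n) (s : ℕ → M), s ∈ X →
          (ts i).realize (updVec s₀ xs fun j => s (xs j)) = (ts i).realize s := fun i s hs =>
        realize_congr (ts i) fun x hx =>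
          agree_team hinj s₀ s (hfv (Or.inl (Set.mem_iUnion.2 ⟨i, hx⟩)))
      have ht : ∀ (s : ℕ → M), s ∈ X →
          t.realize (updVec s₀ xs fun j => s (xs j)) = t.realize s := fun s hs =>
        realize_congr t fun x hx => agree_team hinj s₀ s (hfv (Or.inr hx))
      simp only [TSat]
      show _ ↔ ∃ g : (Fin n → M) → M, _
      constructor
      · intro h
        classical
        have hM : Nonempty M := hne
        refine ⟨fun v => if hv : ∃ s, s ∈ X ∧ (fun i => (ts i).realize s) = v
          then t.realize hv.choose else Classical.arbitrary M, ?_⟩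
        rw [ESat_clause Q hinj]
        simp only [RAssign.set_eq]
        intro a ha
        obtain ⟨s, hs, rfl⟩ := ha
        simp only [ESat, ETerm.eval, ETerm.eval_ofTerm, FAssign.set_eq]
        rw [ht s hs, show (fun i => (ts i).realize (updVec s₀ xs fun j => s (xs j))) =
          fun i => (ts i).realize s from funext fun i => hts i s hs]
        have hv : ∃ s', s' ∈ X ∧ (fun i => (ts i).realize s') = fun i => (ts i).realize s :=
          ⟨s, hs, rfl⟩
        rw [dif_pos hv]
        exact (h hv.choose hv.choose_spec.1 s hs (fun i => congrFun hv.choose_spec.2 i)).symm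
      · rintro ⟨g, hg⟩
        rw [ESat_clause Q hinj] at hg
        simp only [RAssign.set_eq] at hg
        intro s hs s' hs' hagree
        have e1 := hg (fun i => s (xs i)) (mem_relOf hs)
        have e2 := hg (fun i => s' (xs i)) (mem_relOf hs')
        simp only [ESat, ETerm.eval, ETerm.eval_ofTerm, FAssign.set_eq] at e1 e2
        rw [ht s hs, show (fun i => (ts i).realize (updVec s₀ xs fun j => s (xs j))) =
          fun i => (ts i).realize s from funext fun i => hts i s hs] at e1
        rw [ht s' hs', show (fun i => (ts i).realize (updVec s₀ xs fun j => s' (xs j))) =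
          fun i => (ts i).realize s' from funext fun i => hts i s' hs'] at e2
        rw [e1, e2, show (fun i => (ts i).realize s) = fun i => (ts i).realize s' from
          funext hagree]
  | @ndep n ts t =>
    intro hD k xs hinj hfv m
    refine ⟨allVec xs (.nrvar k m fun i => .var (xs i)), ?_, ?_, ?_, ?_, ?_⟩
    · rw [fv_allVec]
      show (⋃ i, (ETerm.var (xs i) : ETerm L).fovars) \ Set.range xs = ∅
      rw [Set.diff_eq_empty]
      intro x hx
      simpa [ETerm.fovars] using hx
    · rw [freeRVars_allVec]
      show ({(k, m)} : Set (ℕ × ℕ)) ⊆ {(k, m)}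
      exact le_refl _
    · rw [freeFVars_allVec]
      show (⋃ i, (ETerm.var (xs i) : ETerm L).ffvars) = ∅
      simp [ETerm.ffvars]
    · exact RNamesGT_allVec _ _ trivial
    · intro M inst hne ρ Fa s₀ X
      rw [ESat_allVec]
      simp only [TSat, ESat, ETerm.eval, RAssign.set_eq]
      constructor
      · intro h a
        subst h
        intro ha
        obtain ⟨s, hs, -⟩ := ha
        exact hs
      · intro h
        ext s
        simp only [Set.mem_empty_iff_false, iff_false]
        intro hs
        have := h (fun i => s (xs i))
        rw [updVec_tup hinj] at this
        exact this (mem_relOf hs)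
  | indep xb yb zb =>
    intro hD; exact absurd hD (by simp [TForm.IsDQ])
  | and φ₁ φ₂ ih1 ih2 =>
    intro hD k xs hinj hfv m
    obtain ⟨ψ₁, h1fv, h1R, h1F, h1N, h1sem⟩ :=
      ih1 hD.1 k xs hinj (fun x hx => hfv (Or.inl hx)) m
    obtain ⟨ψ₂, h2fv, h2R, h2F, h2N, h2sem⟩ :=
      ih2 hD.2 k xs hinj (fun x hx => hfv (Or.inr hx)) m
    refine ⟨.and ψ₁ ψ₂, ?_, ?_, ?_, ⟨h1N, h2N⟩, ?_⟩
    · show ψ₁.fv ∪ ψ₂.fv = ∅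
      rw [h1fv, h2fv]; simp
    · exact Set.union_subset h1R h2R
    · show ψ₁.freeFVars ∪ ψ₂.freeFVars = ∅
      rw [h1F, h2F]; simp
    · intro M inst hne ρ Fa s₀ X
      exact and_congr (h1sem M hne ρ Fa s₀ X) (h2sem M hne ρ Fa s₀ X)
  | or φ₁ φ₂ ih1 ih2 =>
    intro hD k xs hinj hfv m
    obtain ⟨ψ₁, h1fv, h1R, h1F, h1N, h1sem⟩ :=
      ih1 hD.1 k xs hinj (fun x hx => hfv (Or.inl hx)) (m + 1)
    obtain ⟨ψ₂, h2fv, h2R, h2F, h2N, h2sem⟩ :=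
      ih2 hD.2 k xs hinj (fun x hx => hfv (Or.inr hx)) (m + 2)
    refine ⟨.exrel k (m + 1) (.exrel k (m + 2) (.and
      (clause k m xs (.or (.rvar k (m + 1) fun i => .var (xs i))
        (.rvar k (m + 2) fun i => .var (xs i))))
      (.and ψ₁ ψ₂))), ?_, ?_, ?_, ?_, ?_⟩
    · show (clause k m xs _).fv ∪ (ψ₁.fv ∪ ψ₂.fv) = ∅
      rw [h1fv, h2fv, fv_clause_empty]
      · simp
      · show ((⋃ i, (ETerm.var (xs i) : ETerm L).fovars) ∪
          (⋃ i, (ETerm.var (xs i) : ETerm L).fovars)) ⊆ _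
        exact Set.union_subset
          (Set.iUnion_subset fun i => Set.singleton_subset_iff.2 ⟨i, rfl⟩)
          (Set.iUnion_subset fun i => Set.singleton_subset_iff.2 ⟨i, rfl⟩)
    · show (((clause k m xs _).freeRVars ∪ (ψ₁.freeRVars ∪ ψ₂.freeRVars)) \
        {(k, m + 2)}) \ {(k, m + 1)} ⊆ {(k, m)}
      rintro p ⟨⟨hp, hp2⟩, hp1⟩
      rw [freeRVars_clause] at hp
      rcases hp with (hp | hp) | (hp | hp)
      · exact hp
      · rcases hp with hp | hp
        · exact absurd hp hp1
        · exact absurd hp hp2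
      · exact absurd (h1R hp) hp1
      · exact absurd (h2R hp) hp2
    · show (clause k m xs _).freeFVars ∪ (ψ₁.freeFVars ∪ ψ₂.freeFVars) = ∅
      rw [h1F, h2F, freeFVars_clause]
      show ((⋃ i, (ETerm.var (xs i) : ETerm L).ffvars) ∪
        (⋃ i, (ETerm.var (xs i) : ETerm L).ffvars)) ∪ ((∅ : Set (ℕ × ℕ)) ∪ ∅) = ∅
      simp [ETerm.ffvars]
    · exact ⟨by omega, by omega, RNamesGT_clause _ ⟨(by omega : m < m + 1), (by omega : m < m + 2)⟩,
        EForm.RNamesGT.mono (by omega) _ h1N, EForm.RNamesGT.mono (by omega) _ h2N⟩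
    · intro M inst hne ρ Fa s₀ X
      simp only [TSat, ESat, ETerm.eval]
      constructor
      · rintro ⟨Y, Z, rfl, hY, hZ⟩
        refine ⟨relOf xs Y, relOf xs Z, ?_, ?_, ?_⟩
        · rw [ESat_clause Q hinj]
          have v0 : (((ρ.set k m (relOf xs (Y ∪ Z))).set k (m + 1) (relOf xs Y)).set
              k (m + 2) (relOf xs Z)) k m = relOf xs (Y ∪ Z) := by
            rw [RAssign.set_ne _ _ (by omega), RAssign.set_ne _ _ (by omega),
              RAssign.set_eq]
          rw [v0]
          intro a ha
          obtain ⟨s, hs, rfl⟩ := ha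
          simp only [ESat, ETerm.eval]
          rw [updVec_tup hinj]
          have v1 : (((ρ.set k m (relOf xs (Y ∪ Z))).set k (m + 1) (relOf xs Y)).set
              k (m + 2) (relOf xs Z)) k (m + 1) = relOf xs Y := by
            rw [RAssign.set_ne _ _ (by omega), RAssign.set_eq]
          have v2 : (((ρ.set k m (relOf xs (Y ∪ Z))).set k (m + 1) (relOf xs Y)).set
              k (m + 2) (relOf xs Z)) k (m + 2) = relOf xs Z := RAssign.set_eq _ _ _ _
          rw [v1, v2]
          rcases hs with hs | hs
          · exact Or.inl (mem_relOf hs)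
          · exact Or.inr (mem_relOf hs)
        · have base := (h1sem M hne (ρ.set k m (relOf xs (Y ∪ Z))) Fa s₀ Y).1 hY
          refine (ESat_congr Q ψ₁ ?_ (fun _ _ => rfl) (fun _ _ => rfl)).1 base
          intro p hp
          have := h1R hp
          rw [Set.mem_singleton_iff] at this
          subst this
          rw [RAssign.set_eq, RAssign.set_ne _ _ (by omega), RAssign.set_eq]
        · exact (h2sem M hne ((ρ.set k m (relOf xs (Y ∪ Z))).set k (m + 1)
            (relOf xs Y)) Fa s₀ Z).1 hZ
      · rintro ⟨R₁, R₂, hcl, h1, h2⟩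
        rw [ESat_clause Q hinj] at hcl
        have v0 : (((ρ.set k m (relOf xs X)).set k (m + 1) R₁).set k (m + 2) R₂) k m =
            relOf xs X := by
          rw [RAssign.set_ne _ _ (by omega), RAssign.set_ne _ _ (by omega), RAssign.set_eq]
        have v1 : (((ρ.set k m (relOf xs X)).set k (m + 1) R₁).set k (m + 2) R₂)
            k (m + 1) = R₁ := by
          rw [RAssign.set_ne _ _ (by omega), RAssign.set_eq]
        have v2 : (((ρ.set k m (relOf xs X)).set k (m + 1) R₁).set k (m + 2) R₂)
            k (m + 2) = R₂ := RAssign.set_eq _ _ _ _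
        rw [v0] at hcl
        refine ⟨{s ∈ X | (fun i => s (xs i)) ∈ R₁}, {s ∈ X | (fun i => s (xs i)) ∈ R₂},
          ?_, ?_, ?_⟩
        · apply Set.Subset.antisymm
          · intro s hs
            have := hcl (fun i => s (xs i)) (mem_relOf hs)
            simp only [ESat, ETerm.eval] at this
            rw [updVec_tup hinj, v1, v2] at this
            rcases this with h | h
            · exact Or.inl ⟨hs, h⟩
            · exact Or.inr ⟨hs, h⟩
          · rintro s (⟨hs, -⟩ | ⟨hs, -⟩) <;> exact hs
        · apply (h1sem M hne (ρ.set k m (relOf xs X)) Fa s₀ _).2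
          have step1 : ESat Q M ((((ρ.set k m (relOf xs X)).set k (m + 1) R₁).set
              k (m + 2) R₂).set k (m + 1) (relOf xs {s ∈ X | (fun i => s (xs i)) ∈ R₁}))
              Fa s₀ ψ₁ := by
            apply ESat_anti hQ ψ₁ (EForm.RNamesGT.onlyNeg k _ h1N)
              (fun n nm hn => (RAssign.set_ne _ _ hn).symm) ?_ h1
            rw [RAssign.set_eq, v1]
            rintro a ⟨s, ⟨-, hsR⟩, rfl⟩
            exact hsR
          refine (ESat_congr Q ψ₁ ?_ (fun _ _ => rfl) (fun _ _ => rfl)).1 step1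
          intro p hp
          have := h1R hp
          rw [Set.mem_singleton_iff] at this
          subst this
          rw [RAssign.set_eq, RAssign.set_eq]
        · apply (h2sem M hne (ρ.set k m (relOf xs X)) Fa s₀ _).2
          have step1 : ESat Q M ((((ρ.set k m (relOf xs X)).set k (m + 1) R₁).set
              k (m + 2) R₂).set k (m + 2) (relOf xs {s ∈ X | (fun i => s (xs i)) ∈ R₂}))
              Fa s₀ ψ₂ := by
            apply ESat_anti hQ ψ₂ (EForm.RNamesGT.onlyNeg k _ h2N)
              (fun n nm hn => (RAssign.set_ne _ _ hn).symm) ?_ h2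
            rw [RAssign.set_eq, v2]
            rintro a ⟨s, ⟨-, hsR⟩, rfl⟩
            exact hsR
          refine (ESat_congr Q ψ₂ ?_ (fun _ _ => rfl) (fun _ _ => rfl)).1 step1
          intro p hp
          have := h2R hp
          rw [Set.mem_singleton_iff] at this
          subst this
          rw [RAssign.set_eq, RAssign.set_eq]
  | ex y φ₁ ih =>
    intro hD k xs hinj hfv m
    obtain ⟨n, e, heinj, herange⟩ := exists_sup xs (fun _ : Fin 1 => y)
    have hesub : Set.range e ⊆ Set.range xs ∪ Set.range (fun _ : Fin 1 => y) :=
      le_of_eq herange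
    have hsub : TForm.FV φ₁ ⊆ Set.range e := by
      rw [herange]
      intro x hx
      by_cases hxy : x = y
      · exact Or.inr ⟨0, hxy.symm⟩
      · exact Or.inl (hfv ⟨hx, hxy⟩)
    obtain ⟨ψ₁, h1fv, h1R, h1F, h1N, h1sem⟩ := ih hD n e heinj hsub (m + 1)
    refine ⟨.exrel n (m + 1) (.and
      (clause k m xs (.ex y (.rvar n (m + 1) fun i => .var (e i)))) ψ₁),
      ?_, ?_, ?_, ?_, ?_⟩
    · show (clause k m xs _).fv ∪ ψ₁.fv = ∅
      rw [h1fv, fv_clause_empty]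
      · simp
      · show ((⋃ i, (ETerm.var (e i) : ETerm L).fovars) \ {y}) ⊆ Set.range xs
        rintro x ⟨hx, hxy⟩
        obtain ⟨i, hi⟩ := Set.mem_iUnion.1 hx
        have hmem : x ∈ Set.range xs ∪ Set.range (fun _ : Fin 1 => y) :=
          herange ▸ ⟨i, hi.symm⟩
        rcases hmem with hmem | ⟨w, hy⟩
        · exact hmem
        · exact absurd hy.symm hxy
    · show ((clause k m xs _).freeRVars ∪ ψ₁.freeRVars) \ {(n, m + 1)} ⊆ {(k, m)}
      rintro p ⟨hp, hp1⟩
      rw [freeRVars_clause] at hp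
      rcases hp with (hp | hp) | hp
      · exact hp
      · exact absurd hp hp1
      · exact absurd (h1R hp) hp1
    · show (clause k m xs _).freeFVars ∪ ψ₁.freeFVars = ∅
      rw [h1F, freeFVars_clause]
      show (⋃ i, (ETerm.var (e i) : ETerm L).ffvars) ∪ (∅ : Set (ℕ × ℕ)) = ∅
      simp [ETerm.ffvars]
    · exact ⟨by omega, RNamesGT_clause _ (show m < m + 1 by omega),
        EForm.RNamesGT.mono (by omega) _ h1N⟩
    · intro M inst hne ρ Fa s₀ X
      have key : ∀ (s : ℕ → M), s ∈ X → ∀ b : M,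
          (fun i => Function.update (updVec s₀ xs fun j => s (xs j)) y b (e i)) =
          (fun i => Function.update s y b (e i)) := by
        intro s hs b
        have h1 := tuple_key (xs := xs) (zs := fun _ : Fin 1 => y) hesub
          (s := s) (t := updVec s₀ xs fun j => s (xs j))
          (fun j => (updVec_apply hinj s₀ (fun j' => s (xs j')) j).symm) (fun _ => b)
        simpa [updVec_single] using h1.symm
      simp only [TSat, ESat, ETerm.eval]
      constructor
      · rintro ⟨f, hf⟩
        refine ⟨relOf e ((fun s => Function.update s y (f s)) '' X), ?_, ?_⟩
        · rw [ESat_clause Q hinj]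
          have v0 : ((ρ.set k m (relOf xs X)).set n (m + 1)
              (relOf e ((fun s => Function.update s y (f s)) '' X))) k m =
              relOf xs X := by
            rw [RAssign.set_ne _ _ (by omega), RAssign.set_eq]
          rw [v0]
          intro a ha
          obtain ⟨s, hs, rfl⟩ := ha
          simp only [ESat, ETerm.eval]
          refine ⟨f s, ?_⟩
          rw [RAssign.set_eq, key s hs (f s)]
          exact mem_relOf (Set.mem_image_of_mem _ hs)
        · exact (h1sem M hne (ρ.set k m (relOf xs X)) Fa s₀ _).1 hf
      · rintro ⟨R', hcl, h1⟩
        rw [ESat_clause Q hinj] at hcl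
        have v0 : ((ρ.set k m (relOf xs X)).set n (m + 1) R') k m = relOf xs X := by
          rw [RAssign.set_ne _ _ (by omega), RAssign.set_eq]
        rw [v0] at hcl
        simp only [ESat, ETerm.eval, RAssign.set_eq] at hcl
        classical
        have hch : ∀ s : ℕ → M, s ∈ X →
            ∃ b : M, (fun i => Function.update s y b (e i)) ∈ R' := by
          intro s hs
          obtain ⟨b, hb⟩ := hcl (fun i => s (xs i)) (mem_relOf hs)
          rw [key s hs b] at hb
          exact ⟨b, hb⟩
        have hM : Nonempty M := hne
        refine ⟨fun s => if hs : s ∈ X then (hch s hs).choose else Classical.arbitrary M,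
          ?_⟩
        apply (h1sem M hne (ρ.set k m (relOf xs X)) Fa s₀ _).2
        apply ESat_anti hQ ψ₁ (EForm.RNamesGT.onlyNeg n _ h1N)
          (fun n' nm' h' => by rw [RAssign.set_ne _ _ h', RAssign.set_ne _ _ h']) ?_ h1
        rw [RAssign.set_eq, RAssign.set_eq]
        rintro a ⟨s', ⟨s, hs, rfl⟩, rfl⟩
        simp only [dif_pos hs]
        exact (hch s hs).choose_spec
  | all y φ₁ ih =>
    intro hD k xs hinj hfv m
    obtain ⟨n, e, heinj, herange⟩ := exists_sup xs (fun _ : Fin 1 => y)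
    have hesub : Set.range e ⊆ Set.range xs ∪ Set.range (fun _ : Fin 1 => y) :=
      le_of_eq herange
    have hsub : TForm.FV φ₁ ⊆ Set.range e := by
      rw [herange]
      intro x hx
      by_cases hxy : x = y
      · exact Or.inr ⟨0, hxy.symm⟩
      · exact Or.inl (hfv ⟨hx, hxy⟩)
    obtain ⟨ψ₁, h1fv, h1R, h1F, h1N, h1sem⟩ := ih hD n e heinj hsub (m + 1)
    refine ⟨.exrel n (m + 1) (.and
      (clause k m xs (.all y (.rvar n (m + 1) fun i => .var (e i)))) ψ₁),
      ?_, ?_, ?_, ?_, ?_⟩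
    · show (clause k m xs _).fv ∪ ψ₁.fv = ∅
      rw [h1fv, fv_clause_empty]
      · simp
      · show ((⋃ i, (ETerm.var (e i) : ETerm L).fovars) \ {y}) ⊆ Set.range xs
        rintro x ⟨hx, hxy⟩
        obtain ⟨i, hi⟩ := Set.mem_iUnion.1 hx
        have hmem : x ∈ Set.range xs ∪ Set.range (fun _ : Fin 1 => y) :=
          herange ▸ ⟨i, hi.symm⟩
        rcases hmem with hmem | ⟨w, hy⟩
        · exact hmem
        · exact absurd hy.symm hxy
    · show ((clause k m xs _).freeRVars ∪ ψ₁.freeRVars) \ {(n, m + 1)} ⊆ {(k, m)}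
      rintro p ⟨hp, hp1⟩
      rw [freeRVars_clause] at hp
      rcases hp with (hp | hp) | hp
      · exact hp
      · exact absurd hp hp1
      · exact absurd (h1R hp) hp1
    · show (clause k m xs _).freeFVars ∪ ψ₁.freeFVars = ∅
      rw [h1F, freeFVars_clause]
      show (⋃ i, (ETerm.var (e i) : ETerm L).ffvars) ∪ (∅ : Set (ℕ × ℕ)) = ∅
      simp [ETerm.ffvars]
    · exact ⟨by omega, RNamesGT_clause _ (show m < m + 1 by omega),
        EForm.RNamesGT.mono (by omega) _ h1N⟩
    · intro M inst hne ρ Fa s₀ X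
      have key : ∀ (s : ℕ → M), s ∈ X → ∀ b : M,
          (fun i => Function.update (updVec s₀ xs fun j => s (xs j)) y b (e i)) =
          (fun i => Function.update s y b (e i)) := by
        intro s hs b
        have h1 := tuple_key (xs := xs) (zs := fun _ : Fin 1 => y) hesub
          (s := s) (t := updVec s₀ xs fun j => s (xs j))
          (fun j => (updVec_apply hinj s₀ (fun j' => s (xs j')) j).symm) (fun _ => b)
        simpa [updVec_single] using h1.symm
      simp only [TSat, ESat, ETerm.eval]
      constructor
      · intro hf
        refine ⟨relOf e {s' | ∃ s ∈ X, ∃ b : M, s' = Function.update s y b}, ?_, ?_⟩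
        · rw [ESat_clause Q hinj]
          have v0 : ((ρ.set k m (relOf xs X)).set n (m + 1)
              (relOf e {s' | ∃ s ∈ X, ∃ b : M, s' = Function.update s y b})) k m =
              relOf xs X := by
            rw [RAssign.set_ne _ _ (by omega), RAssign.set_eq]
          rw [v0]
          intro a ha
          obtain ⟨s, hs, rfl⟩ := ha
          simp only [ESat, ETerm.eval]
          intro b
          rw [RAssign.set_eq, key s hs b]
          exact mem_relOf ⟨s, hs, b, rfl⟩
        · exact (h1sem M hne (ρ.set k m (relOf xs X)) Fa s₀ _).1 hf
      · rintro ⟨R', hcl, h1⟩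
        rw [ESat_clause Q hinj] at hcl
        have v0 : ((ρ.set k m (relOf xs X)).set n (m + 1) R') k m = relOf xs X := by
          rw [RAssign.set_ne _ _ (by omega), RAssign.set_eq]
        rw [v0] at hcl
        simp only [ESat, ETerm.eval, RAssign.set_eq] at hcl
        apply (h1sem M hne (ρ.set k m (relOf xs X)) Fa s₀ _).2
        apply ESat_anti hQ ψ₁ (EForm.RNamesGT.onlyNeg n _ h1N)
          (fun n' nm' h' => by rw [RAssign.set_ne _ _ h', RAssign.set_ne _ _ h']) ?_ h1
        rw [RAssign.set_eq, RAssign.set_eq]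
        rintro a ⟨s', ⟨s, hs, b, rfl⟩, rfl⟩
        have := hcl (fun i => s (xs i)) (mem_relOf hs) b
        rwa [key s hs b] at this
  | qu zs φ₁ ih =>
    intro hD k xs hinj hfv m
    obtain ⟨n, e, heinj, herange⟩ := exists_sup xs zs
    have hesub : Set.range e ⊆ Set.range xs ∪ Set.range zs := le_of_eq herange
    have hsub : TForm.FV φ₁ ⊆ Set.range e := by
      rw [herange]
      intro x hx
      by_cases hxz : x ∈ Set.range zs
      · exact Or.inr hxz
      · exact Or.inl (hfv ⟨hx, hxz⟩)
    obtain ⟨ψ₁, h1fv, h1R, h1F, h1N, h1sem⟩ := ih hD n e heinj hsub (m + 1)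
    refine ⟨.exrel n (m + 1) (.and
      (clause k m xs (.qu zs (.rvar n (m + 1) fun i => .var (e i)))) ψ₁),
      ?_, ?_, ?_, ?_, ?_⟩
    · show (clause k m xs _).fv ∪ ψ₁.fv = ∅
      rw [h1fv, fv_clause_empty]
      · simp
      · show ((⋃ i, (ETerm.var (e i) : ETerm L).fovars) \ Set.range zs) ⊆ Set.range xs
        rintro x ⟨hx, hxz⟩
        obtain ⟨i, hi⟩ := Set.mem_iUnion.1 hx
        have hmem : x ∈ Set.range xs ∪ Set.range zs := herange ▸ ⟨i, hi.symm⟩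
        rcases hmem with hmem | hmem
        · exact hmem
        · exact absurd hmem hxz
    · show ((clause k m xs _).freeRVars ∪ ψ₁.freeRVars) \ {(n, m + 1)} ⊆ {(k, m)}
      rintro p ⟨hp, hp1⟩
      rw [freeRVars_clause] at hp
      rcases hp with (hp | hp) | hp
      · exact hp
      · exact absurd hp hp1
      · exact absurd (h1R hp) hp1
    · show (clause k m xs _).freeFVars ∪ ψ₁.freeFVars = ∅
      rw [h1F, freeFVars_clause]
      show (⋃ i, (ETerm.var (e i) : ETerm L).ffvars) ∪ (∅ : Set (ℕ × ℕ)) = ∅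
      simp [ETerm.ffvars]
    · exact ⟨by omega, RNamesGT_clause _ (show m < m + 1 by omega),
        EForm.RNamesGT.mono (by omega) _ h1N⟩
    · intro M inst hne ρ Fa s₀ X
      have key : ∀ (s : ℕ → M), s ∈ X → ∀ b : Fin kq → M,
          (fun i => updVec (updVec s₀ xs fun j => s (xs j)) zs b (e i)) =
          (fun i => updVec s zs b (e i)) := by
        intro s hs b
        exact (tuple_key (xs := xs) (zs := zs) hesub
          (s := s) (t := updVec s₀ xs fun j => s (xs j))
          (fun j => (updVec_apply hinj s₀ (fun j' => s (xs j')) j).symm) b).symm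
      simp only [TSat, ESat, ETerm.eval]
      constructor
      · rintro ⟨F, hFQ, hf⟩
        refine ⟨relOf e {s' | ∃ s ∈ X, ∃ b ∈ F s, s' = updVec s zs b}, ?_, ?_⟩
        · rw [ESat_clause Q hinj]
          have v0 : ((ρ.set k m (relOf xs X)).set n (m + 1)
              (relOf e {s' | ∃ s ∈ X, ∃ b ∈ F s, s' = updVec s zs b})) k m =
              relOf xs X := by
            rw [RAssign.set_ne _ _ (by omega), RAssign.set_eq]
          rw [v0]
          intro a ha
          obtain ⟨s, hs, rfl⟩ := ha
          simp only [ESat, ETerm.eval, RAssign.set_eq]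
          apply hQ M (F s) _ (hFQ s hs)
          intro b hb
          show (fun i => updVec (updVec s₀ xs fun j => s (xs j)) zs b (e i)) ∈
            relOf e {s' | ∃ s ∈ X, ∃ b ∈ F s, s' = updVec s zs b}
          rw [key s hs b]
          exact mem_relOf ⟨s, hs, b, hb, rfl⟩
        · exact (h1sem M hne (ρ.set k m (relOf xs X)) Fa s₀ _).1 hf
      · rintro ⟨R', hcl, h1⟩
        rw [ESat_clause Q hinj] at hcl
        have v0 : ((ρ.set k m (relOf xs X)).set n (m + 1) R') k m = relOf xs X := by
          rw [RAssign.set_ne _ _ (by omega), RAssign.set_eq]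
        rw [v0] at hcl
        simp only [ESat, ETerm.eval, RAssign.set_eq] at hcl
        refine ⟨fun s => {b | (fun i => updVec s zs b (e i)) ∈ R'}, ?_, ?_⟩
        · intro s hs
          have hmem := hcl (fun i => s (xs i)) (mem_relOf hs)
          have hset : {b : Fin kq → M |
              (fun i => updVec (updVec s₀ xs fun j => s (xs j)) zs b (e i)) ∈ R'} =
              {b : Fin kq → M | (fun i => updVec s zs b (e i)) ∈ R'} := by
            ext b
            show _ ∈ R' ↔ _ ∈ R'
            rw [key s hs b]
          rwa [hset] at hmem
        · apply (h1sem M hne (ρ.set k m (relOf xs X)) Fa s₀ _).2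
          apply ESat_anti hQ ψ₁ (EForm.RNamesGT.onlyNeg n _ h1N)
            (fun n' nm' h' => by rw [RAssign.set_ne _ _ h', RAssign.set_ne _ _ h']) ?_ h1
          rw [RAssign.set_eq, RAssign.set_eq]
          rintro a ⟨s', ⟨s, hs, b, hb, rfl⟩, rfl⟩
          exact hb

end TeamSemantics


open TeamSemantics

/-- Translation of D(Q) into ESO(Q): for monotone `Q` and every
formula `φ` of D(Q) over `τ` with free variables `x₁,…,x_k`, there is a sentence `ψ`
of ESO(Q) over `τ ∪ {R}` (`R` a new `k`-ary relation symbol occurring only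
negatively) such that for all `M` and teams `X` with domain `{x₁,…,x_k}`:
`M,X ⊨ φ` iff `(M, rel(X)) ⊨ ψ`. -/
theorem dq_to_esoq
    (kq : ℕ) (Q : Quant.{u} kq) (hQ : Q.Mono)
    (L : FirstOrder.Language.{0, 0}) (k : ℕ) (xs : Fin k → ℕ)
    (hxs : Function.Injective xs)
    (φ : TForm L kq) (hφ : φ.IsDQ) (hfv : φ.FV ⊆ Set.range xs) :
    ∃ ψ : EForm L kq, ψ.SentenceWithR k ∧ ψ.OnlyNeg k 0 ∧
      ∀ (M : Type u) [L.Structure M], Nonempty M → ∀ X : Set (ℕ → M),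
        (TSat Q M φ X ↔ ETrueWithR Q M (relOf xs X) ψ) := by
  obtain ⟨ψ, hfv', hR, hF, hN, hsem⟩ := main_trans Q hQ φ hφ k xs hxs hfv 0
  refine ⟨ψ, ⟨hfv', hR, hF⟩, EForm.RNamesGT.onlyNeg k ψ hN, ?_⟩
  intro M inst hne X
  constructor
  · intro h ρ Fa s
    exact (hsem M hne ρ Fa s X).1 h
  · intro h
    classical
    have hM : Nonempty M := hne
    exact (hsem M hne (fun n _ => (∅ : Set (Fin n → M)))
      (fun _ _ _ => Classical.arbitrary M) (fun _ => Classical.arbitrary M) X).2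
      (h _ _ _)
end

section
/- Key team-semantics equivalence used in the main theorem: let Q be a monotone generalized quantifier of type ⟨k⟩, and let ψ be a quantifier-free first-order formula over τ ∪ {f₁,…,fₙ} in which every occurrence of the function symbol fᵢ is of the form fᵢ(x̄ⁱ) for a fixed tuple x̄ⁱ of pairwise distinct variables among x₁,…,xₘ. Let θ be obtained from ψ by replacing each fᵢ(x̄ⁱ) by a fresh variable yᵢ. Then for every τ-structure M, every interpretation f̄ = (f₁,…,fₙ) of the function symbols, and every team X with domain {x₁,…,xₘ}: (M,f̄),X ⊨ ψ if and only if M,X* ⊨ θ, where X* = X[g₁/y₁]⋯[gₙ/yₙ] and gᵢ(s) = fᵢ(s(x̄ⁱ)) for each s. -/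
open FirstOrder

universe u

namespace TeamSemantics

section KeyAux

variable {L : FirstOrder.Language.{0, 0}} {kq n mv : ℕ}
variable {M : Type u} [L.Structure M]

lemma foldl_image {α β : Type*} (g : β → α → α) :
    ∀ (l : List β) (X : Set α),
      l.foldl (fun Y i => (g i) '' Y) X = (fun s => l.foldl (fun t i => g i t) s) '' X := by
  intro l
  induction l with
  | nil => intro X; simp
  | cons b l ih =>
    intro X
    simp only [List.foldl_cons, ih, Set.image_image]

lemma foldl_update_ne {F : Fin n → (ℕ → M) → M} (ys : Fin n → ℕ) :
    ∀ (l : List (Fin n)) (s : ℕ → M) (x : ℕ), (∀ i ∈ l, ys i ≠ x) →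
      (l.foldl (fun t i => Function.update t (ys i) (F i t)) s) x = s x := by
  intro l
  induction l with
  | nil => intro s x _; rfl
  | cons b l ih =>
    intro s x h
    simp only [List.foldl_cons]
    rw [ih _ _ (fun i hi => h i (List.mem_cons_of_mem _ hi)),
      Function.update_of_ne (Ne.symm (h b (List.mem_cons_self)))]

variable (Fa : FAssign M) (a : Fin n → ℕ) (xs : Fin mv → ℕ)
  (v : (i : Fin n) → Fin (a i) → Fin mv) (ys : Fin n → ℕ)

/-- The iterated update map `s ↦ s*`. -/
def starF (s : ℕ → M) : ℕ → M :=
  (List.finRange n).foldl (fun t i => Function.update t (ys i)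
    (Fa (a i) i.val (fun j => t (xs (v i j))))) s

lemma foldl_update_eq (hys : Function.Injective ys) (hdisj : ∀ i j, ys i ≠ xs j) :
    ∀ (l : List (Fin n)), l.Nodup → ∀ (s : ℕ → M) (i : Fin n), i ∈ l →
      (l.foldl (fun t i => Function.update t (ys i)
          (Fa (a i) i.val (fun j => t (xs (v i j))))) s) (ys i)
        = Fa (a i) i.val (fun j => s (xs (v i j))) := by
  intro l
  induction l with
  | nil => intro _ s i hi; simp at hi
  | cons b l ih =>
    intro hnd s i hi
    simp only [List.foldl_cons]
    rcases List.mem_cons.mp hi with rfl | hi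
    · rw [foldl_update_ne]
      · simp
      · intro j hj hje
        exact (List.nodup_cons.mp hnd).1 (by rwa [hys hje] at hj)
    · rw [ih (List.nodup_cons.mp hnd).2 _ _ hi]
      congr 1
      funext j
      exact Function.update_of_ne (Ne.symm (hdisj b (v i j))) _ _

lemma starF_ys (hys : Function.Injective ys) (hdisj : ∀ i j, ys i ≠ xs j)
    (s : ℕ → M) (i : Fin n) :
    starF Fa a xs v ys s (ys i) = Fa (a i) i.val (fun j => s (xs (v i j))) :=
  foldl_update_eq Fa a xs v ys hys hdisj _ (List.nodup_finRange n) s i (List.mem_finRange i)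

lemma starF_ne (s : ℕ → M) (x : ℕ) (hx : ∀ i, ys i ≠ x) :
    starF Fa a xs v ys s x = s x :=
  foldl_update_ne ys _ s x (fun i _ => hx i)

lemma term_unfunc (hys : Function.Injective ys) (hdisj : ∀ i j, ys i ≠ xs j)
    (s : ℕ → M) :
    ∀ (t : ETerm L), t.GoodOcc n a (fun i j => xs (v i j)) →
      (∀ i, ys i ∉ t.fovars) →
      (t.unfunc n ys).realize (starF Fa a xs v ys s) = t.eval Fa s := by
  intro t
  induction t with
  | var x =>
    intro _ hf
    simp only [ETerm.unfunc, ETerm.eval, FirstOrder.Language.Term.realize]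
    exact starF_ne Fa a xs v ys s x (fun i h => hf i (by simp [ETerm.fovars, h]))
  | func f ts ihts =>
    intro hg hf
    simp only [ETerm.unfunc, ETerm.eval, FirstOrder.Language.Term.realize]
    congr 1
    funext j
    exact ihts j (hg j) (fun i hi => hf i (by
      simp only [ETerm.fovars, Set.mem_iUnion]; exact ⟨j, hi⟩))
  | fvar nn name ts ihts =>
    intro hg _
    obtain ⟨i, h, hname, hts⟩ := hg
    subst h
    subst hname
    simp only [ETerm.unfunc, i.isLt, dif_pos, ETerm.eval,
      FirstOrder.Language.Term.realize, Fin.eta]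
    rw [starF_ys Fa a xs v ys hys hdisj]
    congr 1
    funext j
    rw [hts j]
    simp [ETerm.eval, Fin.cast_refl]

variable (Q : Quant.{u} kq)

lemma point_equiv (ρ : RAssign M) (hys : Function.Injective ys)
    (hdisj : ∀ i j, ys i ≠ xs j) (s : ℕ → M) :
    ∀ (ψ : EForm L kq), ψ.QFree → ψ.NoRVar →
      ψ.GoodOcc n a (fun i j => xs (v i j)) →
      (∀ i, ys i ∉ ψ.fv) →
      (ESat Q M ρ Fa s ψ ↔ PSat Q M (ψ.toTForm n ys) (starF Fa a xs v ys s)) := by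
  intro ψ
  induction ψ with
  | rel R ts =>
    intro _ _ hg hf
    simp only [ESat, EForm.toTForm, PSat]
    have : (fun i => ((ts i).unfunc n ys).realize (starF Fa a xs v ys s))
        = fun i => (ts i).eval Fa s := by
      funext j
      exact term_unfunc Fa a xs v ys hys hdisj s (ts j) (hg j) (fun i hi => hf i (by
        simp only [EForm.fv, Set.mem_iUnion]; exact ⟨j, hi⟩))
    rw [this]
  | nrel R ts =>
    intro _ _ hg hf
    simp only [ESat, EForm.toTForm, PSat]
    have : (fun i => ((ts i).unfunc n ys).realize (starF Fa a xs v ys s))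
        = fun i => (ts i).eval Fa s := by
      funext j
      exact term_unfunc Fa a xs v ys hys hdisj s (ts j) (hg j) (fun i hi => hf i (by
        simp only [EForm.fv, Set.mem_iUnion]; exact ⟨j, hi⟩))
    rw [this]
  | eEq t t' =>
    intro _ _ hg hf
    simp only [ESat, EForm.toTForm, PSat]
    rw [term_unfunc Fa a xs v ys hys hdisj s t hg.1
        (fun i hi => hf i (by simp [EForm.fv, hi])),
      term_unfunc Fa a xs v ys hys hdisj s t' hg.2
        (fun i hi => hf i (by simp [EForm.fv, hi]))]
  | eNe t t' =>
    intro _ _ hg hf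
    simp only [ESat, EForm.toTForm, PSat]
    rw [term_unfunc Fa a xs v ys hys hdisj s t hg.1
        (fun i hi => hf i (by simp [EForm.fv, hi])),
      term_unfunc Fa a xs v ys hys hdisj s t' hg.2
        (fun i hi => hf i (by simp [EForm.fv, hi]))]
  | rvar n name ts => intro _ hnr; exact absurd hnr (by simp [EForm.NoRVar])
  | nrvar n name ts => intro _ hnr; exact absurd hnr (by simp [EForm.NoRVar])
  | and φ ψ ihφ ihψ =>
    intro hqf hnr hg hf
    simp only [ESat, EForm.toTForm, PSat]
    rw [ihφ hqf.1 hnr.1 hg.1 (fun i hi => hf i (Set.mem_union_left _ hi)),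
      ihψ hqf.2 hnr.2 hg.2 (fun i hi => hf i (Set.mem_union_right _ hi))]
  | or φ ψ ihφ ihψ =>
    intro hqf hnr hg hf
    simp only [ESat, EForm.toTForm, PSat]
    rw [ihφ hqf.1 hnr.1 hg.1 (fun i hi => hf i (Set.mem_union_left _ hi)),
      ihψ hqf.2 hnr.2 hg.2 (fun i hi => hf i (Set.mem_union_right _ hi))]
  | ex x φ ihφ => intro hqf; exact absurd hqf (by simp [EForm.QFree])
  | all x φ ihφ => intro hqf; exact absurd hqf (by simp [EForm.QFree])
  | qu zs φ ihφ => intro hqf; exact absurd hqf (by simp [EForm.QFree])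
  | exrel nn name φ ihφ => intro hqf; exact absurd hqf (by simp [EForm.QFree])
  | exfun nn name φ ihφ => intro hqf; exact absurd hqf (by simp [EForm.QFree])

lemma flat_qfree :
    ∀ (ψ : EForm L kq), ψ.QFree → ∀ (Y : Set (ℕ → M)),
      TSat Q M (ψ.toTForm n ys) Y ↔ ∀ s ∈ Y, PSat Q M (ψ.toTForm n ys) s := by
  intro ψ
  induction ψ with
  | rel R ts => intro _ Y; simp only [EForm.toTForm, TSat, PSat]
  | nrel R ts => intro _ Y; simp only [EForm.toTForm, TSat, PSat]
  | eEq t t' => intro _ Y; simp only [EForm.toTForm, TSat, PSat]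
  | eNe t t' => intro _ Y; simp only [EForm.toTForm, TSat, PSat]
  | rvar nn name ts => intro _ Y; simp only [EForm.toTForm, TSat, PSat]
  | nrvar nn name ts => intro _ Y; simp only [EForm.toTForm, TSat, PSat]
  | and φ ψ ihφ ihψ =>
    intro hqf Y
    simp only [EForm.toTForm, TSat, PSat, ihφ hqf.1, ihψ hqf.2]
    constructor
    · rintro ⟨h1, h2⟩ s hs; exact ⟨h1 s hs, h2 s hs⟩
    · intro h; exact ⟨fun s hs => (h s hs).1, fun s hs => (h s hs).2⟩
  | or φ ψ ihφ ihψ =>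
    intro hqf Y
    simp only [EForm.toTForm, TSat, PSat]
    constructor
    · rintro ⟨Y₁, Y₂, rfl, h1, h2⟩ s hs
      rcases hs with hs | hs
      · exact Or.inl ((ihφ hqf.1 Y₁).mp h1 s hs)
      · exact Or.inr ((ihψ hqf.2 Y₂).mp h2 s hs)
    · intro h
      refine ⟨{s ∈ Y | PSat Q M (φ.toTForm n ys) s},
        {s ∈ Y | PSat Q M (ψ.toTForm n ys) s}, ?_, ?_, ?_⟩
      · ext s
        constructor
        · intro hs; rcases h s hs with h' | h'
          · exact Or.inl ⟨hs, h'⟩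
          · exact Or.inr ⟨hs, h'⟩
        · rintro (⟨hs, _⟩ | ⟨hs, _⟩) <;> exact hs
      · exact (ihφ hqf.1 _).mpr (fun s hs => hs.2)
      · exact (ihψ hqf.2 _).mpr (fun s hs => hs.2)
  | ex x φ ihφ => intro hqf; exact absurd hqf (by simp [EForm.QFree])
  | all x φ ihφ => intro hqf; exact absurd hqf (by simp [EForm.QFree])
  | qu zs φ ihφ => intro hqf; exact absurd hqf (by simp [EForm.QFree])
  | exrel nn name φ ihφ => intro hqf; exact absurd hqf (by simp [EForm.QFree])
  | exfun nn name φ ihφ => intro hqf; exact absurd hqf (by simp [EForm.QFree])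

end KeyAux
end TeamSemantics

open TeamSemantics

/-- Key team-semantics equivalence used in the main theorem: if
every occurrence of `fᵢ` in the quantifier-free first-order formula `ψ` is of the
form `fᵢ(x̄ⁱ)` for a fixed tuple `x̄ⁱ` of pairwise distinct variables among
`x₁,…,xₘ`, and `θ` arises from `ψ` by replacing each `fᵢ(x̄ⁱ)` by the fresh variable
`yᵢ`, then `(M,f̄),X ⊨ ψ` iff `M,X* ⊨ θ`, where `X* = X[g₁/y₁]⋯[gₙ/yₙ]` with
`gᵢ(s) = fᵢ(s(x̄ⁱ))`. -/
theorem key_team_equivalence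
    (kq : ℕ) (Q : Quant.{u} kq)
    (L : FirstOrder.Language.{0, 0}) (n mv : ℕ) (a : Fin n → ℕ)
    (xs : Fin mv → ℕ) (hxs : Function.Injective xs)
    (v : (i : Fin n) → Fin (a i) → Fin mv) (hv : ∀ i, Function.Injective (v i))
    (ys : Fin n → ℕ) (hys : Function.Injective ys)
    (hdisj : ∀ i j, ys i ≠ xs j)
    (ψ : EForm L kq) (hqf : ψ.QFree) (hnr : ψ.NoRVar)
    (hgood : ψ.GoodOcc n a (fun i j => xs (v i j)))
    (hfresh : ∀ i, ys i ∉ ψ.fv)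
    (M : Type u) [L.Structure M] (ρ : RAssign M) (Fa : FAssign M)
    (X : Set (ℕ → M)) :
    (∀ s ∈ X, ESat Q M ρ Fa s ψ) ↔
      TSat Q M (ψ.toTForm n ys)
        ((List.finRange n).foldl
          (fun Y i =>
            (fun s => Function.update s (ys i)
              (Fa (a i) i.val (fun j => s (xs (v i j))))) '' Y)
          X) := by
  rw [foldl_image (fun (i : Fin n) (s : ℕ → M) => Function.update s (ys i)
      (Fa (a i) i.val (fun j => s (xs (v i j)))))]
  rw [flat_qfree ys Q ψ hqf]
  constructor
  · rintro h s' ⟨s, hs, rfl⟩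
    exact (point_equiv Fa a xs v ys Q ρ hys hdisj s ψ hqf hnr hgood hfresh).mp (h s hs)
  · intro h s hs
    exact (point_equiv Fa a xs v ys Q ρ hys hdisj s ψ hqf hnr hgood hfresh).mpr
      (h _ ⟨s, hs, rfl⟩)
end
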